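/- arXiv:2009.03844 — 5 statements merged into one kernel-verified Lean document; each statement's English description precedes it below -/
import Mathlib

section
/- Fix integers p ≥ 1 and s ≥ 1 and an index set m ⊆ {1, …, p} with |m| = s. For β ∈ B_m := {β ∈ ℝ^p : β_j = 0 for all j ∉ m}, define the subset C_β of (ℝ × ℝ^{1+p}) × (ℝ × ℝ^{1+p}) by C_β := { ((y, x), (y', x')) : 1{y > y'} = 1{ (x₁ − x₁') + (x₋₁ − x₋₁')'β > 0 } }, where x = (x₁, x₋₁) with x₋₁ ∈ ℝ^p. Then the class {C_β : β ∈ B_m} shatters no finite subset of cardinality 2s + 3; that is, for every finite set A ⊆ (ℝ × ℝ^{1+p})² with |A| = 2s + 3, there exists a subset T ⊆ A such that T ≠ C_β ∩ A for every β ∈ B_m. (Equivalently, the VC-index of the class F_m = {f_β : β ∈ B_m} is at most 2s + 3.) -/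
/-!
A relation `∑ cᵢ uᵢ = 0` with some `cᵢ > 0` among the feature vectors `uᵢ ∈ ℝ^κ` rules out the
labelling `{i | Pᵢ ↔ cᵢ > 0}`: if it were cut out by `{i | Pᵢ ↔ ⟪b, uᵢ⟫ > 0}`, then
`cᵢ > 0 ↔ ⟪b, uᵢ⟫ > 0` for every `i`, so all terms of `∑ cᵢ ⟪b, uᵢ⟫ = 0` are nonnegative and one
is positive. For `β ∈ B_m` the rank rule is such a labelling, with `κ = m ∪ {x₁}` of size `s + 1`
and `b = (β|_m, 1)`, and `2s + 3 > s + 1` points always carry such a relation.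
-/

noncomputable section

namespace RankVC

/-- An observation `w = (y, x)` with `x = (x₁, x₋₁)`, `x₋₁ ∈ ℝ^p`. -/
abbrev Obs (p : ℕ) : Type := ℝ × ℝ × (Fin p → ℝ)

/-- Euclidean inner product on `ℝ^p`. -/
def dot {p : ℕ} (a b : Fin p → ℝ) : ℝ := ∑ h, a h * b h

/-- `B_m = {β ∈ ℝ^p : β_j = 0 for all j ∉ m}`. -/
def Bm {p : ℕ} (m : Finset (Fin p)) : Set (Fin p → ℝ) :=
  {β | ∀ j ∉ m, β j = 0}

/-- The set of pairs of observations on which `f_β = 1`: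
`C_β = {((y,x),(y',x')) : 1{y > y'} = 1{(x₁ − x₁') + (x₋₁ − x₋₁')'β > 0}}`. -/
def Cset {p : ℕ} (β : Fin p → ℝ) : Set (Obs p × Obs p) :=
  {q | q.2.1 < q.1.1 ↔
    0 < (q.1.2.1 - q.2.2.1) + dot (fun h => q.1.2.2 h - q.2.2.2 h) β}

section Halfspaces

variable {ι : Type*} [Fintype ι]

theorem nonpos_of_sum_mul_eq_zero_of_pos_iff_pos {R : Type*} [Ring R] [LinearOrder R]
    [IsStrictOrderedRing R] {c d : ι → R} (hcd : ∀ i, 0 < c i ↔ 0 < d i)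
    (hsum : ∑ i, c i * d i = 0) (i : ι) : c i ≤ 0 := by
  have hnonneg : ∀ i, 0 ≤ c i * d i := fun i => by
    rcases lt_or_ge 0 (c i) with hc | hc
    · exact (mul_pos hc ((hcd i).1 hc)).le
    · exact mul_nonneg_of_nonpos_of_nonpos hc (not_lt.1 (mt (hcd i).2 (not_lt.2 hc)))
  have hzero := (Finset.sum_eq_zero_iff_of_nonneg fun i _ => hnonneg i).1 hsum i
    (Finset.mem_univ i)
  by_contra! hc
  exact (mul_pos hc ((hcd i).1 hc)).ne' hzero

theorem exists_sum_smul_eq_zero_pos_of_not_linearIndependent {R V : Type*} [Ring R]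
    [LinearOrder R] [IsOrderedRing R] [AddCommGroup V] [Module R V] {u : ι → V}
    (hu : ¬LinearIndependent R u) : ∃ c : ι → R, ∑ i, c i • u i = 0 ∧ ∃ i, 0 < c i := by
  obtain ⟨c, hc, i, hci⟩ := Fintype.not_linearIndependent_iff.1 hu
  rcases hci.lt_or_gt with hneg | hpos
  · refine ⟨-c, ?_, i, neg_pos.2 hneg⟩
    simp only [Pi.neg_apply, neg_smul, Finset.sum_neg_distrib, hc, neg_zero]
  · exact ⟨c, hc, i, hpos⟩

theorem exists_set_ne_setOf_iff_pos_dotProduct {κ : Type*} [Fintype κ]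
    (hcard : Fintype.card κ < Fintype.card ι) (u : ι → κ → ℝ) (P : ι → Prop) :
    ∃ T : Set ι, ∀ b : κ → ℝ, T ≠ {i | P i ↔ 0 < u i ⬝ᵥ b} := by
  have hu : ¬LinearIndependent ℝ u := fun hli => by
    have := hli.fintype_card_le_finrank
    rw [Module.finrank_fintype_fun_eq_card] at this
    omega
  obtain ⟨c, hc, i₀, hi₀⟩ := exists_sum_smul_eq_zero_pos_of_not_linearIndependent hu
  refine ⟨{i | P i ↔ 0 < c i}, fun b hT => hi₀.not_ge ?_⟩
  have hcb : ∀ i, 0 < c i ↔ 0 < u i ⬝ᵥ b := fun i => by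
    have := Set.ext_iff.1 hT i
    simp only [Set.mem_ofPred_eq] at this
    tauto
  have hsum : ∑ i, c i * (u i ⬝ᵥ b) = 0 := by
    simp only [← smul_eq_mul, ← smul_dotProduct, ← sum_dotProduct, hc, zero_dotProduct]
  exact nonpos_of_sum_mul_eq_zero_of_pos_iff_pos hcb hsum i₀

end Halfspaces

variable {p : ℕ}

def features (m : Finset (Fin p)) (q : Obs p × Obs p) : Option m → ℝ
  | none => q.1.2.1 - q.2.2.1
  | some j => q.1.2.2 j - q.2.2.2 j

def coeffs (m : Finset (Fin p)) (β : Fin p → ℝ) : Option m → ℝ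
  | none => 1
  | some j => β j

theorem dot_eq_sum_of_mem_Bm {m : Finset (Fin p)} {β : Fin p → ℝ} (hβ : β ∈ Bm m)
    (a : Fin p → ℝ) : dot a β = ∑ j : m, a j * β j := by
  rw [dot, Finset.sum_coe_sort m (fun j => a j * β j)]
  exact (Finset.sum_subset (Finset.subset_univ m) fun j _ hj => by rw [hβ j hj, mul_zero]).symm

theorem mem_Cset_iff_features_dotProduct_coeffs {m : Finset (Fin p)} {β : Fin p → ℝ}
    (hβ : β ∈ Bm m) (q : Obs p × Obs p) :
    q ∈ Cset β ↔ (q.2.1 < q.1.1 ↔ 0 < features m q ⬝ᵥ coeffs m β) := by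
  rw [dotProduct, Fintype.sum_option]
  simp only [Cset, Set.mem_ofPred_eq, dot_eq_sum_of_mem_Bm hβ, coeffs, features, mul_one]

theorem vc_index_bound_general (p s : ℕ)
    (m : Finset (Fin p)) (hm : m.card = s) :
    ∀ A : Finset (Obs p × Obs p), A.card = 2 * s + 3 →
      ∃ T : Set (Obs p × Obs p), T ⊆ ↑A ∧
        ∀ β ∈ Bm m, T ≠ Cset β ∩ ↑A := by
  intro A hA
  have hcard : Fintype.card (Option m) < Fintype.card A := by
    simp only [Fintype.card_option, Fintype.card_coe, hm, hA]
    omega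
  obtain ⟨T, hT⟩ := exists_set_ne_setOf_iff_pos_dotProduct hcard (fun q => features m q)
    (fun q => q.1.2.1 < q.1.1.1)
  refine ⟨Subtype.val '' T, Set.image_subset_iff.2 fun q _ => q.2,
    fun β hβ hTβ => hT (coeffs m β) ?_⟩
  ext q
  rw [Set.mem_ofPred_eq, ← mem_Cset_iff_features_dotProduct_coeffs hβ,
    ← Subtype.val_injective.mem_set_image, hTβ]
  simp

/-- The class `{C_β : β ∈ B_m}` shatters no set of cardinality `2s + 3`; i.e.
the VC-index of `F_m = {f_β : β ∈ B_m}` is at most `2s + 3`. -/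
theorem vc_index_bound (p s : ℕ) (hp : 1 ≤ p) (hs : 1 ≤ s)
    (m : Finset (Fin p)) (hm : m.card = s) :
    ∀ A : Finset (Obs p × Obs p), A.card = 2 * s + 3 →
      ∃ T : Set (Obs p × Obs p), T ⊆ ↑A ∧
        ∀ β ∈ Bm m, T ≠ Cset β ∩ ↑A :=
  vc_index_bound_general p s m hm
end RankVC
end
end

section
/- There exists a universal constant C₄ ≥ 1 such that for all integers p ≥ 1 and s ≥ 1, every index set m ⊆ {1, …, p} with |m| = s, every probability measure Q on (ℝ × ℝ^{1+p}) × (ℝ × ℝ^{1+p}), and every ε ∈ (0, 1): there exists a finite collection G of measurable functions on (ℝ × ℝ^{1+p})² with |G| ≤ (32·e·C₄ / ε)^{4s+4} such that for every β ∈ B_m there is some γ ∈ G with ∫ (f_β − γ)² dQ < ε². In other words, the L₂(Q) covering number of the class F_m := {f_β : β ∈ B_m} satisfies sup_Q N(ε, F_m, L₂(Q)) ≤ (32·e·C₄ / ε)^{4s+4}. -/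
open MeasureTheory

noncomputable section

namespace RankCoverF

/-- An observation `w = (y, x)` with `x = (x₁, x₋₁)`, `x₋₁ ∈ ℝ^p`. -/
abbrev Obs (p : ℕ) : Type := ℝ × ℝ × (Fin p → ℝ)

/-- Euclidean inner product on `ℝ^p`. -/
def dot {p : ℕ} (a b : Fin p → ℝ) : ℝ := ∑ h, a h * b h

/-- The rank prediction rule `R_β(x, x') = 1{x₁ + x₋₁'β > x₁' + x₋₁''β}`. -/
def Rrule {p : ℕ} (β : Fin p → ℝ) (x x' : ℝ × (Fin p → ℝ)) : ℝ :=
  if x'.1 + dot x'.2 β < x.1 + dot x.2 β then 1 else 0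

/-- `f_β(w, w') = 1{ 1{y > y'} = R_β(x, x') }`. -/
def fker {p : ℕ} (β : Fin p → ℝ) (w w' : Obs p) : ℝ :=
  if (if w'.1 < w.1 then (1 : ℝ) else 0) = Rrule β w.2 w'.2 then 1 else 0

/-- `B_m = {β ∈ ℝ^p : β_j = 0 for all j ∉ m}`. -/
def Bm {p : ℕ} (m : Finset (Fin p)) : Set (Fin p → ℝ) :=
  {β | ∀ j ∉ m, β j = 0}

end RankCoverF

/-!
A maximal `ε`-separated subfamily of `F_m` is an `ε`-net, so it suffices to bound the size `N` of
an `ε`-separated family `T`. Two distinct members of `T` are `{0,1}`-valued and agree with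
`Q`-probability at most `1 - ε²`, so `n` independent draws from `Q` with `N² (1 - ε²)ⁿ < 1`
separate all of `T`. On such a sample `f_β` is determined by the sign pattern of a linear form on
an `(s + 1)`-dimensional space, and these patterns have VC dimension at most `s + 1`; the
Sauer–Shelah lemma gives `N ≤ (e n / (s + 1))^(s + 1)`, and `n ≈ 7 (s + 1) N^(1/(2(s+1))) / ε²`
turns this into `N ≤ (8 e / ε²)^(2(s + 1))`.
-/

open Finset

theorem vcDim_le_finrank_of_forall_mem_iff_pos
    {ι 𝕜 V : Type*} [DecidableEq ι] [Field 𝕜] [LinearOrder 𝕜] [IsStrictOrderedRing 𝕜]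
    [AddCommGroup V] [Module 𝕜 V] [FiniteDimensional 𝕜 V]
    (u : ι → V) (𝒜 : Finset (Finset ι))
    (h𝒜 : ∀ A ∈ 𝒜, ∃ φ : V →ₗ[𝕜] 𝕜, ∀ k, k ∈ A ↔ 0 < φ (u k)) :
    𝒜.vcDim ≤ Module.finrank 𝕜 V := by
  refine Finset.sup_le fun S hS => ?_
  by_contra! hcard
  -- a linear dependence among the `u k`, `k ∈ S`, whose positive part `φ` cannot cut out
  obtain ⟨c, hc, hpos⟩ : ∃ c : ι → 𝕜, ∑ k ∈ S, c k • u k = 0 ∧ ∃ k ∈ S, 0 < c k := by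
    have hdep : ¬ LinearIndepOn 𝕜 u (S : Set ι) := fun hli => by
      simpa using hli.fintype_card_le_finrank.trans_lt hcard
    obtain ⟨c, hc, k, hk, hck⟩ := not_linearIndepOn_finset_iff.1 hdep
    rcases hck.lt_or_gt with hneg | hpos
    · exact ⟨-c, by simp [neg_smul, sum_neg_distrib, hc], k, hk, by simpa using hneg⟩
    · exact ⟨c, hc, k, hk, hpos⟩
  obtain ⟨A, hA, hSA⟩ := (mem_shatterer.1 hS) (filter_subset (fun k => 0 < c k) S)
  obtain ⟨φ, hφ⟩ := h𝒜 A hA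
  have hsign : ∀ k ∈ S, (0 < φ (u k) ↔ 0 < c k) := fun k hk => by
    simpa [hk, hφ] using congrArg (k ∈ ·) hSA
  have hzero : ∑ k ∈ S, c k * φ (u k) = 0 := by
    simpa [map_sum, map_smul] using congrArg φ hc
  refine (sum_pos' (fun k hk => ?_) ?_).ne' hzero
  · by_cases hck : 0 < c k
    · exact (mul_pos hck ((hsign k hk).2 hck)).le
    · exact mul_nonneg_of_nonpos_of_nonpos (not_lt.1 hck) (not_lt.1 (mt (hsign k hk).1 hck))
  · obtain ⟨k, hk, hck⟩ := hpos
    exact ⟨k, hk, mul_pos hck ((hsign k hk).2 hck)⟩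

theorem sum_choose_le_exp_mul_div_pow {d n : ℕ} (hd : 1 ≤ d) (hdn : d ≤ n) :
    ∑ k ≤ d, (n.choose k : ℝ) ≤ (Real.exp 1 * n / d) ^ d := by
  have hn : (0 : ℝ) < n := by exact_mod_cast hd.trans hdn
  set x : ℝ := d / n
  have hx0 : 0 < x := by positivity
  have hx1 : x ≤ 1 := div_le_one_of_le₀ (by exact_mod_cast hdn) hn.le
  have key : x ^ d * ∑ k ≤ d, (n.choose k : ℝ) ≤ Real.exp 1 ^ d :=
    calc x ^ d * ∑ k ≤ d, (n.choose k : ℝ)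
        ≤ ∑ k ≤ d, (n.choose k : ℝ) * x ^ k := by
          rw [mul_sum]
          refine sum_le_sum fun k hk => ?_
          rw [mul_comm]
          exact mul_le_mul_of_nonneg_left (pow_le_pow_of_le_one hx0.le hx1 (mem_Iic.1 hk))
            (by positivity)
      _ ≤ ∑ k ∈ range (n + 1), (n.choose k : ℝ) * x ^ k := by
          refine sum_le_sum_of_subset_of_nonneg (fun k hk => ?_) fun _ _ _ => by positivity
          exact mem_range.2 (Nat.lt_succ_of_le ((mem_Iic.1 hk).trans hdn))
      _ = (x + 1) ^ n := by simp [add_pow, mul_comm]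
      _ ≤ Real.exp x ^ n := by gcongr; linarith [Real.add_one_le_exp x]
      _ = Real.exp 1 ^ d := by
          rw [← Real.exp_nat_mul, ← Real.exp_nat_mul, mul_div_cancel₀ _ hn.ne', mul_one]
  calc ∑ k ≤ d, (n.choose k : ℝ) ≤ Real.exp 1 ^ d / x ^ d := by
        rw [le_div_iff₀ (by positivity), mul_comm]; exact key
    _ = (Real.exp 1 * n / d) ^ d := by
        rw [← div_pow]; congr 1; simp only [x]; field_simp

theorem exists_sample_injOn_comp {X Y : Type*} [MeasurableSpace X] (Q : Measure X)
    [IsProbabilityMeasure Q] (T : Finset (X → Y)) {δ : ℝ} (hδ0 : 0 ≤ δ)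
    (hδ : ∀ g ∈ T, ∀ g' ∈ T, g ≠ g' → Q.real {x | g x = g' x} ≤ δ) {n : ℕ}
    (hn : (#T : ℝ) ^ 2 * δ ^ n < 1) :
    ∃ ω : Fin n → X, Set.InjOn (fun g : X → Y => g ∘ ω) T := by
  classical
  set μ := Measure.pi fun _ : Fin n => Q
  let E : (X → Y) × (X → Y) → Set (Fin n → X) :=
    fun gg => Set.univ.pi fun _ => {x | gg.1 x = gg.2 x}
  have hE : ∀ gg ∈ T.offDiag, μ (E gg) ≤ ENNReal.ofReal δ ^ n := by
    rintro ⟨g, g'⟩ hgg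
    obtain ⟨hg, hg', hne⟩ := mem_offDiag.1 hgg
    simp only [E, μ, Measure.pi_pi, prod_const, card_univ, Fintype.card_fin]
    gcongr
    exact (ENNReal.le_ofReal_iff_toReal_le (measure_ne_top _ _) hδ0).2 (hδ g hg g' hg' hne)
  have hU : μ (⋃ gg ∈ T.offDiag, E gg) < 1 :=
    calc μ (⋃ gg ∈ T.offDiag, E gg) ≤ ∑ gg ∈ T.offDiag, μ (E gg) := measure_biUnion_finset_le _ _
      _ ≤ #T.offDiag * ENNReal.ofReal δ ^ n := by simpa using sum_le_sum hE
      _ ≤ #T ^ 2 * ENNReal.ofReal δ ^ n := by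
          gcongr
          rw [offDiag_card, sq]
          exact_mod_cast Nat.sub_le _ _
      _ = ENNReal.ofReal (#T ^ 2 * δ ^ n) := by
          rw [ENNReal.ofReal_mul (by positivity), ENNReal.ofReal_pow hδ0, ENNReal.ofReal_pow
            (Nat.cast_nonneg _), ENNReal.ofReal_natCast]
      _ < 1 := ENNReal.ofReal_lt_one.2 hn
  obtain ⟨ω, hω⟩ : ∃ ω, ω ∉ ⋃ gg ∈ T.offDiag, E gg := by
    by_contra! h
    rw [Set.eq_univ_of_forall h, measure_univ] at hU
    exact lt_irrefl _ hU
  refine ⟨ω, fun g hg g' hg' heq => by_contra fun hne => hω ?_⟩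
  exact Set.mem_biUnion (x := (g, g')) (mem_offDiag.2 ⟨hg, hg', hne⟩)
    (Set.mem_univ_pi.2 fun k => congrFun heq k)

theorem measureReal_eq_eq_one_sub_integral_sq {X : Type*} [MeasurableSpace X] (Q : Measure X)
    [IsProbabilityMeasure Q] {g g' : X → ℝ} (hg : Measurable g) (hg' : Measurable g')
    (h01 : ∀ x, g x = 0 ∨ g x = 1) (h01' : ∀ x, g' x = 0 ∨ g' x = 1) :
    Q.real {x | g x = g' x} = 1 - ∫ x, (g x - g' x) ^ 2 ∂Q := by
  have hD : MeasurableSet {x | g x = g' x} := measurableSet_eq_fun hg hg'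
  have hsq : (fun x => (g x - g' x) ^ 2) = {x | g x = g' x}ᶜ.indicator 1 := by
    ext x
    rcases h01 x with h | h <;> rcases h01' x with h' | h' <;> simp [h, h']
  rw [hsq, integral_indicator_one hD.compl, probReal_compl_eq_one_sub hD, sub_sub_cancel]

theorem exists_finset_subset_forall_exists_rel_of_card_le {α : Type*} {S : Set α}
    {R : α → α → Prop} (hrefl : ∀ x, R x x) [Std.Symm R] {M : ℕ}
    (hM : ∀ T : Finset α, ↑T ⊆ S → (T : Set α).Pairwise (fun x y => ¬ R x y) → #T ≤ M) :
    ∃ T : Finset α, ↑T ⊆ S ∧ #T ≤ M ∧ ∀ x ∈ S, ∃ y ∈ T, R x y := by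
  classical
  by_contra! h
  have grow : ∀ k, ∃ T : Finset α, ↑T ⊆ S ∧ (T : Set α).Pairwise (fun x y => ¬ R x y) ∧
      #T = k := by
    intro k
    induction k with
    | zero => exact ⟨∅, by simp, by simp, rfl⟩
    | succ k ih =>
      obtain ⟨T, hTS, hTsep, rfl⟩ := ih
      obtain ⟨x, hxS, hx⟩ := h T hTS (hM T hTS hTsep)
      have hxT : x ∉ T := fun hxT => hx x hxT (hrefl x)
      have : Std.Symm fun x y => ¬ R x y := ⟨fun _ _ hxy hyx => hxy (Std.Symm.symm _ _ hyx)⟩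
      refine ⟨insert x T, ?_, ?_, card_insert_of_notMem hxT⟩
      · rw [coe_insert]; exact Set.insert_subset hxS hTS
      · rw [coe_insert]; exact hTsep.insert_of_symm fun y hy _ => hx y hy
  obtain ⟨T, hTS, hTsep, hcard⟩ := grow (M + 1)
  have := hM T hTS hTsep
  omega

theorem exists_nat_pow_mul_one_sub_sq_pow_lt_one {d : ℕ} {ε y : ℝ} (hd : 1 ≤ d) (hε0 : 0 < ε)
    (hε1 : ε < 1) (hy : 1 ≤ y) :
    ∃ n : ℕ, d ≤ n ∧ (n : ℝ) ≤ 8 * d * y / ε ^ 2 ∧ (y ^ (2 * d)) ^ 2 * (1 - ε ^ 2) ^ n < 1 := by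
  have hd1 : (1 : ℝ) ≤ d := by exact_mod_cast hd
  have hε2 : 0 < ε ^ 2 := by positivity
  have hε21 : ε ^ 2 < 1 := by nlinarith
  have hdy : (d : ℝ) ≤ d * y := le_mul_of_one_le_right (by positivity) hy
  -- `n = ⌈7 d y / ε²⌉` works since `y ^ (4 d) ≤ exp (4 d (y - 1))` and `(1 - ε²)ⁿ ≤ exp (-n ε²)`
  set n := ⌈7 * d * y / ε ^ 2⌉₊
  have hn_ge : 7 * d * y ≤ n * ε ^ 2 := (div_le_iff₀ hε2).1 (Nat.le_ceil _)
  refine ⟨n, ?_, ?_, ?_⟩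
  · have : (d : ℝ) ≤ n := by nlinarith
    exact_mod_cast this
  · rw [le_div_iff₀ hε2]
    calc n * ε ^ 2 ≤ (7 * d * y / ε ^ 2 + 1) * ε ^ 2 := by
          gcongr; exact (Nat.ceil_lt_add_one (by positivity)).le
      _ = 7 * d * y + ε ^ 2 := by field_simp
      _ ≤ 8 * d * y := by linarith
  · calc (y ^ (2 * d)) ^ 2 * (1 - ε ^ 2) ^ n
          ≤ Real.exp (y - 1) ^ (2 * d * 2) * Real.exp (-ε ^ 2) ^ n := by
          rw [← pow_mul]
          gcongr
          · linarith [Real.add_one_le_exp (y - 1)]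
          · linarith [Real.add_one_le_exp (-ε ^ 2)]
      _ = Real.exp (4 * d * (y - 1) - n * ε ^ 2) := by
          rw [← Real.exp_nat_mul, ← Real.exp_nat_mul, ← Real.exp_add]
          push_cast
          ring_nf
      _ < 1 := Real.exp_lt_one_iff.2 (by nlinarith)

theorem le_pow_of_forall_sample_bound {N d : ℕ} {ε : ℝ} (hd : 1 ≤ d) (hε0 : 0 < ε) (hε1 : ε < 1)
    (h : ∀ n : ℕ, d ≤ n → (N : ℝ) ^ 2 * (1 - ε ^ 2) ^ n < 1 →
      (N : ℝ) ≤ (Real.exp 1 * n / d) ^ d) :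
    (N : ℝ) ≤ (8 * Real.exp 1 / ε ^ 2) ^ (2 * d) := by
  rcases Nat.eq_zero_or_pos N with rfl | hN
  · rw [Nat.cast_zero]; positivity
  set y : ℝ := (N : ℝ) ^ (((2 * d : ℕ) : ℝ)⁻¹)
  have hyN : y ^ (2 * d) = N := Real.rpow_inv_natCast_pow (Nat.cast_nonneg _) (by omega)
  have hy1 : 1 ≤ y := Real.one_le_rpow (by exact_mod_cast hN) (by positivity)
  obtain ⟨n, hdn, hn, hsmall⟩ := exists_nat_pow_mul_one_sub_sq_pow_lt_one hd hε0 hε1 hy1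
  have hbase : Real.exp 1 * n / d ≤ 8 * Real.exp 1 / ε ^ 2 * y :=
    calc Real.exp 1 * n / d ≤ Real.exp 1 * (8 * d * y / ε ^ 2) / d := by gcongr
      _ = 8 * Real.exp 1 / ε ^ 2 * y := by field_simp
  have hyd : y ^ d ≤ (8 * Real.exp 1 / ε ^ 2) ^ d := by
    refine le_of_mul_le_mul_right ?_ (pow_pos (by positivity : (0 : ℝ) < y) d)
    calc y ^ d * y ^ d = N := by rw [← pow_add, ← two_mul, hyN]
      _ ≤ (Real.exp 1 * n / d) ^ d := h n hdn (hyN ▸ hsmall)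
      _ ≤ (8 * Real.exp 1 / ε ^ 2 * y) ^ d := by gcongr
      _ = (8 * Real.exp 1 / ε ^ 2) ^ d * y ^ d := mul_pow _ _ _
  calc (N : ℝ) = (y ^ d) ^ 2 := by rw [← hyN, pow_mul']
    _ ≤ ((8 * Real.exp 1 / ε ^ 2) ^ d) ^ 2 := by gcongr
    _ = (8 * Real.exp 1 / ε ^ 2) ^ (2 * d) := (pow_mul' _ _ _).symm

namespace RankCoverF

def Fm {p : ℕ} (m : Finset (Fin p)) : Set (Obs p × Obs p → ℝ) :=
  (fun β => Function.uncurry (fker β)) '' Bm m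

/-- For `β ∈ B_m`, `R_β` only sees the differences of the two observations on the
coordinates `1` and `m`. -/
def pairFeature {p : ℕ} (m : Finset (Fin p)) (q : Obs p × Obs p) : ℝ × (m → ℝ) :=
  (q.1.2.1 - q.2.2.1, fun j => q.1.2.2 j - q.2.2.2 j)

def scoreForm {p : ℕ} (m : Finset (Fin p)) (β : Fin p → ℝ) : ℝ × (m → ℝ) →ₗ[ℝ] ℝ :=
  LinearMap.fst ℝ ℝ (m → ℝ) +
    Fintype.linearCombination ℝ (fun j : m => β j) ∘ₗ LinearMap.snd ℝ ℝ (m → ℝ)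

theorem scoreForm_pairFeature {p : ℕ} {m : Finset (Fin p)} {β : Fin p → ℝ} (hβ : β ∈ Bm m)
    (q : Obs p × Obs p) :
    scoreForm m β (pairFeature m q) = (q.1.2.1 + dot q.1.2.2 β) - (q.2.2.1 + dot q.2.2.2 β) := by
  have hdot : ∑ j : m, (q.1.2.2 j - q.2.2.2 j) * β j = dot q.1.2.2 β - dot q.2.2.2 β := by
    simp_rw [dot, ← sum_sub_distrib, ← sub_mul]
    rw [sum_coe_sort m fun h => (q.1.2.2 h - q.2.2.2 h) * β h]
    exact sum_subset (subset_univ m) fun h _ hh => by simp [hβ h hh]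
  simp only [scoreForm, pairFeature, LinearMap.add_apply, LinearMap.fst_apply,
    LinearMap.coe_comp, Function.comp_apply, LinearMap.snd_apply,
    Fintype.linearCombination_apply, smul_eq_mul, hdot]
  ring

theorem fker_eq_ite_iff {p : ℕ} {m : Finset (Fin p)} {β : Fin p → ℝ} (hβ : β ∈ Bm m)
    (w w' : Obs p) :
    fker β w w' = if (w'.1 < w.1 ↔ 0 < scoreForm m β (pairFeature m (w, w'))) then 1 else 0 := by
  have hscore := scoreForm_pairFeature hβ (w, w')
  unfold fker Rrule
  by_cases h₁ : w'.1 < w.1 <;> by_cases h₂ : w'.2.1 + dot w'.2.2 β < w.2.1 + dot w.2.2 β <;>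
    simp [h₁, h₂, hscore]

theorem fker_eq_zero_or_one {p : ℕ} (β : Fin p → ℝ) (w w' : Obs p) :
    fker β w w' = 0 ∨ fker β w w' = 1 := by
  unfold fker
  split_ifs <;> simp

theorem measurable_fker {p : ℕ} (β : Fin p → ℝ) : Measurable (Function.uncurry (fker β)) := by
  unfold fker Rrule dot
  refine Measurable.ite (measurableSet_eq_fun ?_ ?_) measurable_const measurable_const <;>
    exact Measurable.ite (measurableSet_lt (by fun_prop) (by fun_prop)) measurable_const
      measurable_const

theorem card_le_sum_choose_of_injOn_sample {p n : ℕ} {m : Finset (Fin p)}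
    {T : Finset (Obs p × Obs p → ℝ)} (hT : ↑T ⊆ Fm m) (ω : Fin n → Obs p × Obs p)
    (hω : Set.InjOn (fun g : Obs p × Obs p → ℝ => g ∘ ω) T) :
    #T ≤ ∑ k ≤ #m + 1, n.choose k := by
  classical
  obtain ⟨B, hBm, rfl⟩ := Finset.subset_set_image_iff.1 hT
  let pattern : (Fin p → ℝ) → Finset (Fin n) := fun β =>
    univ.filter fun k => 0 < scoreForm m β (pairFeature m (ω k))
  let decode : Finset (Fin n) → Fin n → ℝ := fun A k =>
    if ((ω k).2.1 < (ω k).1.1 ↔ k ∈ A) then 1 else 0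
  have hdecode : ∀ β ∈ B, Function.uncurry (fker β) ∘ ω = decode (pattern β) :=
    fun β hβ => funext fun k => by
      simp only [Function.comp_apply, Function.uncurry, fker_eq_ite_iff (hBm hβ), Prod.mk.eta,
        decode, pattern, mem_filter, mem_univ, true_and]
  have hvc : (B.image pattern).vcDim ≤ #m + 1 := by
    have := vcDim_le_finrank_of_forall_mem_iff_pos (fun k => pairFeature m (ω k)) (B.image pattern)
      (by
        simp only [mem_image]
        rintro _ ⟨β, -, rfl⟩
        exact ⟨scoreForm m β, by simp [pattern]⟩)
    simpa [Module.finrank_prod, add_comm] using this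
  calc #(B.image fun β => Function.uncurry (fker β))
      = #((B.image fun β => Function.uncurry (fker β)).image (· ∘ ω)) :=
        (card_image_of_injOn hω).symm
    _ = #((B.image pattern).image decode) := by
        rw [image_image, image_image]; exact congrArg card (image_congr hdecode)
    _ ≤ #(B.image pattern) := card_image_le
    _ ≤ #(B.image pattern).shatterer := card_le_card_shatterer _
    _ ≤ ∑ k ≤ (B.image pattern).vcDim, (Fintype.card (Fin n)).choose k :=
        card_shatterer_le_sum_vcDim
    _ ≤ ∑ k ≤ #m + 1, n.choose k := by
        rw [Fintype.card_fin]; exact sum_le_sum_of_subset (Iic_subset_Iic.2 hvc)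

theorem card_le_of_pairwise_le_integral_sq {p : ℕ} (m : Finset (Fin p))
    (Q : Measure (Obs p × Obs p)) [IsProbabilityMeasure Q] {ε : ℝ} (hε0 : 0 < ε) (hε1 : ε < 1)
    {T : Finset (Obs p × Obs p → ℝ)} (hT : ↑T ⊆ Fm m)
    (hsep : (T : Set (Obs p × Obs p → ℝ)).Pairwise fun g g' => ε ^ 2 ≤ ∫ q, (g q - g' q) ^ 2 ∂Q) :
    (#T : ℝ) ≤ (8 * Real.exp 1 / ε ^ 2) ^ (2 * (#m + 1)) := by
  refine le_pow_of_forall_sample_bound (by omega) hε0 hε1 fun n hn hsmall => ?_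
  have hagree : ∀ g ∈ T, ∀ g' ∈ T, g ≠ g' → Q.real {q | g q = g' q} ≤ 1 - ε ^ 2 := by
    intro g hg g' hg' hne
    obtain ⟨β, -, rfl⟩ := hT hg
    obtain ⟨β', -, rfl⟩ := hT hg'
    rw [measureReal_eq_eq_one_sub_integral_sq Q (measurable_fker β) (measurable_fker β')
      (fun q => fker_eq_zero_or_one β q.1 q.2) (fun q => fker_eq_zero_or_one β' q.1 q.2)]
    linarith [hsep hg hg' hne]
  obtain ⟨ω, hω⟩ := exists_sample_injOn_comp Q T (by nlinarith) hagree hsmall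
  calc (#T : ℝ) ≤ ∑ k ≤ #m + 1, (n.choose k : ℝ) := by
        exact_mod_cast card_le_sum_choose_of_injOn_sample hT ω hω
    _ ≤ _ := by exact_mod_cast sum_choose_le_exp_mul_div_pow (by omega) hn

/-- Uniform `L₂(Q)` covering-number bound for the class `F_m = {f_β : β ∈ B_m}`:
there is a universal constant `C₄ ≥ 1` with
`sup_Q N(ε, F_m, L₂(Q)) ≤ (32·e·C₄/ε)^{4s+4}` for every `ε ∈ (0,1)`. -/
theorem covering_number_Fm :
    ∃ C₄ : ℝ, 1 ≤ C₄ ∧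
      ∀ (p s : ℕ), 1 ≤ p → 1 ≤ s →
      ∀ m : Finset (Fin p), m.card = s →
      ∀ Q : Measure (Obs p × Obs p), IsProbabilityMeasure Q →
      ∀ ε : ℝ, 0 < ε → ε < 1 →
      ∃ G : Finset ((Obs p × Obs p) → ℝ),
        (∀ γ ∈ G, Measurable γ) ∧
        (G.card : ℝ) ≤ (32 * Real.exp 1 * C₄ / ε) ^ (4 * s + 4) ∧
        ∀ β ∈ Bm m, ∃ γ ∈ G,
          (∫ q, (fker β q.1 q.2 - γ q) ^ 2 ∂Q) < ε ^ 2 := by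
  refine ⟨1, le_rfl, fun p s _ _ m hm Q _ ε hε0 hε1 => ?_⟩
  have : Std.Symm fun g g' : Obs p × Obs p → ℝ => ∫ q, (g q - g' q) ^ 2 ∂Q < ε ^ 2 :=
    ⟨fun g g' h => by simpa only [← neg_sub (g' _), neg_sq] using h⟩
  obtain ⟨G, hGF, hGcard, hcover⟩ := exists_finset_subset_forall_exists_rel_of_card_le
    (S := Fm m) (fun g => by simpa using pow_pos hε0 2)
    (M := ⌊(8 * Real.exp 1 / ε ^ 2) ^ (2 * (s + 1))⌋₊) fun T hT hsep => Nat.le_floor <| hm ▸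
      card_le_of_pairwise_le_integral_sq m Q hε0 hε1 hT (hsep.imp fun _ _ => le_of_not_gt)
  refine ⟨G, fun γ hγ => ?_, ?_, fun β hβ => hcover _ ⟨β, hβ, rfl⟩⟩
  · obtain ⟨β, -, rfl⟩ := hGF hγ
    exact measurable_fker β
  · calc (#G : ℝ) ≤ (8 * Real.exp 1 / ε ^ 2) ^ (2 * (s + 1)) :=
          (Nat.cast_le.2 hGcard).trans (Nat.floor_le (by positivity))
      _ ≤ ((32 * Real.exp 1 * 1 / ε) ^ 2) ^ (2 * (s + 1)) := by
          gcongr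
          rw [div_pow]
          gcongr
          nlinarith [Real.add_one_le_exp 1]
      _ = (32 * Real.exp 1 * 1 / ε) ^ (4 * s + 4) := by rw [← pow_mul]; ring_nf

end RankCoverF
end
end

section
/- There exists a universal constant C₄ ≥ 1 such that for all integers p ≥ 1 and s ≥ 1, every index set m ⊆ {1, …, p} with |m| = s, every probability distribution P on ℝ × ℝ^{1+p}, every probability measure Q on (ℝ × ℝ^{1+p}) × (ℝ × ℝ^{1+p}), and every ε ∈ (0, 1): the L₂(Q) covering number of the class H_m := {2^{−1} h_β : β ∈ B_m} satisfies N(ε, H_m, L₂(Q)) ≤ (512·e·C₄ / ε)^{16s+16}. -/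
/-!
Write `f_β` as the indicator of the set `A_β` of pairs on which the order of the responses agrees
with the order predicted by `β`. Then `h_β` is the Hoeffding projection of `1_{A_β}`, and each of
its four terms moves by at most the corresponding measure of `A_β ∆ A_β'`, so
`‖½ h_β - ½ h_β'‖²_{L₂(Q)} ≤ ν(A_β ∆ A_β')` for `ν = Q + Q₁ ⊗ P + P ⊗ Q₂ + P ⊗ P`, a measure of
mass `4`. A maximal subset of `B_m` that is `ε²`-separated for `ν(A_β ∆ A_β')` is therefore an
`ε`-net, and it remains to bound its size `N`.

For `β ∈ B_m`, whether a pair lies in `A_β` is decided by the sign of an affine function of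
`(β_j)_{j ∈ m}`. By Radon's argument such half-spaces have VC dimension at most `s + 1`, so by
Sauer–Shelah the sets `A_β` cut out at most `∑_{k ≤ s+1} (n choose k) ≤ (e n / (s+1))^{s+1}`
patterns on `n` points. On the other hand, `n ≈ 2 log N / δ` points drawn from `ν / 4`, with
`δ = ε² / 4`, separate all `N` sets with positive probability, so the `N` patterns are distinct.
Comparing the two counts gives `N ≤ (24 e / ε²)^{2s+2}`.
-/

open MeasureTheory

noncomputable section

namespace RankCoverH

/-- An observation `w = (y, x)` with `x = (x₁, x₋₁)`, `x₋₁ ∈ ℝ^p`. -/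
abbrev Obs (p : ℕ) : Type := ℝ × ℝ × (Fin p → ℝ)

/-- Euclidean inner product on `ℝ^p`. -/
def dot {p : ℕ} (a b : Fin p → ℝ) : ℝ := ∑ h, a h * b h

/-- The rank prediction rule `R_β(x, x') = 1{x₁ + x₋₁'β > x₁' + x₋₁''β}`. -/
def Rrule {p : ℕ} (β : Fin p → ℝ) (x x' : ℝ × (Fin p → ℝ)) : ℝ :=
  if x'.1 + dot x'.2 β < x.1 + dot x.2 β then 1 else 0

/-- `f_β(w, w') = 1{ 1{y > y'} = R_β(x, x') }`. -/
def fker {p : ℕ} (β : Fin p → ℝ) (w w' : Obs p) : ℝ :=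
  if (if w'.1 < w.1 then (1 : ℝ) else 0) = Rrule β w.2 w'.2 then 1 else 0

/-- The population criterion `S(β) = ∫∫ f_β(w, w') dP(w) dP(w')`. -/
def Spop {p : ℕ} (P : Measure (Obs p)) (β : Fin p → ℝ) : ℝ :=
  ∫ w, ∫ w', fker β w w' ∂P ∂P

/-- The `P`-degenerate second-order Hoeffding kernel
`h_β(w, w') = f_β(w, w') − ∫ f_β(w, v) dP(v) − ∫ f_β(v, w') dP(v) + S(β)`. -/
def hker {p : ℕ} (P : Measure (Obs p)) (β : Fin p → ℝ) (w w' : Obs p) : ℝ :=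
  fker β w w' - (∫ v, fker β w v ∂P) - (∫ v, fker β v w' ∂P) + Spop P β

/-- `B_m = {β ∈ ℝ^p : β_j = 0 for all j ∉ m}`. -/
def Bm {p : ℕ} (m : Finset (Fin p)) : Set (Fin p → ℝ) :=
  {β | ∀ j ∉ m, β j = 0}

open scoped symmDiff

section Halfspaces

open Finset

variable {κ ι : Type*} [DecidableEq κ] [Fintype ι] {c : κ → ι → ℝ} {𝒜 : Finset (Finset κ)}

theorem not_shatters_of_sum_smul_eq_zero
    (h𝒜 : ∀ A ∈ 𝒜, ∃ w : ι → ℝ, ∀ k, k ∈ A ↔ 0 < c k ⬝ᵥ w)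
    {t : Finset κ} {g : κ → ℝ} (hg : ∑ k ∈ t, g k • c k = 0) {k₀ : κ} (hk₀t : k₀ ∈ t)
    (hk₀ : 0 < g k₀) : ¬ 𝒜.Shatters t := by
  intro ht
  obtain ⟨A, hA, htA⟩ := ht (filter_subset (fun k => 0 < g k) t)
  obtain ⟨w, hw⟩ := h𝒜 A hA
  have hsign : ∀ k ∈ t, (0 < c k ⬝ᵥ w ↔ 0 < g k) := fun k hk => by
    rw [← hw, ← (mem_filter (p := fun k => 0 < g k)).trans (and_iff_right hk), ← htA, mem_inter,
      and_iff_right hk]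
  have hnonneg : ∀ k ∈ t, 0 ≤ g k * (c k ⬝ᵥ w) := fun k hk => by
    rcases le_or_gt (g k) 0 with h | h
    · exact mul_nonneg_of_nonpos_of_nonpos h (not_lt.1 fun h' => h.not_gt ((hsign k hk).1 h'))
    · exact (mul_pos h ((hsign k hk).2 h)).le
  have hpos : 0 < ∑ k ∈ t, g k * (c k ⬝ᵥ w) :=
    sum_pos' hnonneg ⟨k₀, hk₀t, mul_pos hk₀ ((hsign k₀ hk₀t).2 hk₀)⟩
  have hzero : ∑ k ∈ t, g k * (c k ⬝ᵥ w) = 0 := by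
    simp_rw [← smul_eq_mul, ← smul_dotProduct, ← sum_dotProduct, hg, zero_dotProduct]
  exact hpos.ne' hzero

theorem card_le_of_shatters (h𝒜 : ∀ A ∈ 𝒜, ∃ w : ι → ℝ, ∀ k, k ∈ A ↔ 0 < c k ⬝ᵥ w)
    {t : Finset κ} (ht : 𝒜.Shatters t) : #t ≤ Fintype.card ι := by
  by_contra! hcard
  have hdep : ¬ LinearIndepOn ℝ c (t : Set κ) := fun h => by
    have := h.fintype_card_le_finrank
    simp only [Finset.coe_sort_coe, Fintype.card_coe, Module.finrank_fintype_fun_eq_card] at this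
    omega
  obtain ⟨g, hg, k₀, hk₀t, hk₀⟩ := not_linearIndepOn_finset_iff.1 hdep
  rcases hk₀.lt_or_gt with hneg | hpos
  · refine not_shatters_of_sum_smul_eq_zero h𝒜 (g := -g) ?_ hk₀t (by simpa using hneg) ht
    simp [neg_smul, hg]
  · exact not_shatters_of_sum_smul_eq_zero h𝒜 hg hk₀t hpos ht

theorem vcDim_le_card_of_halfspaces (h𝒜 : ∀ A ∈ 𝒜, ∃ w : ι → ℝ, ∀ k, k ∈ A ↔ 0 < c k ⬝ᵥ w) :
    𝒜.vcDim ≤ Fintype.card ι :=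
  Finset.sup_le fun _ ht => card_le_of_shatters h𝒜 (mem_shatterer.1 ht)

end Halfspaces

section Counting

open Finset Real

theorem sum_Iic_choose_le_exp_mul_div_pow {n d : ℕ} (hd : 1 ≤ d) (hdn : d ≤ n) :
    ∑ k ∈ Iic d, (n.choose k : ℝ) ≤ (exp 1 * n / d) ^ d := by
  have hn : (0 : ℝ) < n := by exact_mod_cast hd.trans hdn
  set t : ℝ := d / n
  have ht0 : 0 < t := by positivity
  have ht1 : t ≤ 1 := div_le_one_of_le₀ (by exact_mod_cast hdn) hn.le
  have key : (∑ k ∈ Iic d, (n.choose k : ℝ)) * t ^ d ≤ exp d :=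
    calc (∑ k ∈ Iic d, (n.choose k : ℝ)) * t ^ d
        ≤ ∑ k ∈ Iic d, (n.choose k : ℝ) * t ^ k := by
          rw [sum_mul]
          exact sum_le_sum fun k hk => mul_le_mul_of_nonneg_left
            (pow_le_pow_of_le_one ht0.le ht1 (mem_Iic.1 hk)) (by positivity)
      _ ≤ ∑ k ∈ range (n + 1), (n.choose k : ℝ) * t ^ k :=
          sum_le_sum_of_subset_of_nonneg
            (fun k hk => mem_range.2 (Nat.lt_succ_of_le ((mem_Iic.1 hk).trans hdn)))
            (fun _ _ _ => by positivity)
      _ = (t + 1) ^ n := by rw [add_pow]; simp [mul_comm]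
      _ ≤ exp t ^ n := by gcongr; exact add_one_le_exp t
      _ = exp d := by rw [← exp_nat_mul]; simp only [t]; field_simp
  rw [← le_div_iff₀ (by positivity)] at key
  refine key.trans_eq ?_
  simp only [t, div_pow, mul_pow, ← exp_one_pow]
  field_simp

theorem exists_separating_sample {α ι : Type*} [MeasurableSpace α] [Fintype ι]
    (μ : Measure α) [IsProbabilityMeasure μ] {D : ι → ι → Set α}
    (hD : ∀ i j, MeasurableSet (D i j)) {δ : ℝ} (hδ : ∀ i j, i ≠ j → δ ≤ μ.real (D i j))
    (hδ1 : δ ≤ 1) {n : ℕ} (hn : (Fintype.card ι : ℝ) ^ 2 * (1 - δ) ^ n < 1) :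
    ∃ x : Fin n → α, ∀ i j, i ≠ j → ∃ k, x k ∈ D i j := by
  classical
  set ν := Measure.pi fun _ : Fin n => μ
  set miss : ι × ι → Set (Fin n → α) := fun ij => Set.univ.pi fun _ => (D ij.1 ij.2)ᶜ
  have hmiss : ∀ ij ∈ (univ : Finset ι).offDiag, ν.real (miss ij) ≤ (1 - δ) ^ n := by
    rintro ⟨i, j⟩ hij
    have hpi : ν.real (miss (i, j)) = μ.real (D i j)ᶜ ^ n := by
      simp [miss, ν, measureReal_def, Measure.pi_pi]
    rw [hpi, measureReal_compl (hD i j), probReal_univ]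
    exact pow_le_pow_left₀ (by simp [measureReal_le_one])
      (by linarith [hδ i j (mem_offDiag.1 hij).2.2]) n
  have hunion : ν.real (⋃ ij ∈ (univ : Finset ι).offDiag, miss ij) < 1 :=
    calc _ ≤ ∑ ij ∈ (univ : Finset ι).offDiag, ν.real (miss ij) :=
          measureReal_biUnion_finset_le _ _
      _ ≤ (Fintype.card ι : ℝ) ^ 2 * (1 - δ) ^ n := by
          refine (sum_le_card_nsmul _ _ _ hmiss).trans ?_
          rw [nsmul_eq_mul, sq]
          refine mul_le_mul_of_nonneg_right ?_ (pow_nonneg (by linarith) n)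
          rw [offDiag_card, card_univ]
          exact_mod_cast Nat.sub_le _ _
      _ < 1 := hn
  obtain ⟨x, hx⟩ : ∃ x, x ∉ ⋃ ij ∈ (univ : Finset ι).offDiag, miss ij := by
    by_contra! h
    rw [Set.eq_univ_of_forall h, probReal_univ] at hunion
    exact hunion.false
  refine ⟨x, fun i j hij => ?_⟩
  by_contra! hall
  exact hx (Set.mem_biUnion (x := (i, j)) (by simpa using hij) fun k _ => hall k)

end Counting

section Arithmetic

open Real

theorem exists_sq_mul_pow_lt_one {N d : ℕ} (hN : 1 ≤ N) (hd : 1 ≤ d) {δ : ℝ} (hδ0 : 0 < δ)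
    (hδ1 : δ < 1) :
    ∃ n : ℕ, d ≤ n ∧ (N : ℝ) ^ 2 * (1 - δ) ^ n < 1 ∧ (n : ℝ) ≤ d + 2 * log N / δ + 1 := by
  set n := d + ⌈2 * log N / δ⌉₊
  have hceil : 2 * log N / δ ≤ ⌈2 * log N / δ⌉₊ := Nat.le_ceil _
  have hN0 : (0 : ℝ) < N := by exact_mod_cast hN
  refine ⟨n, Nat.le_add_right _ _, ?_, ?_⟩
  · have hlog : 2 * log N ≤ δ * n := by
      rw [div_le_iff₀ hδ0] at hceil
      have : 0 ≤ δ * d := by positivity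
      push_cast [n]
      linarith
    calc (N : ℝ) ^ 2 * (1 - δ) ^ n < N ^ 2 * exp (-δ) ^ n := by
          have := add_one_lt_exp (neg_ne_zero.2 hδ0.ne')
          gcongr
          linarith
      _ ≤ N ^ 2 * exp (-(2 * log N)) := by
          rw [← exp_nat_mul]
          gcongr
          linarith
      _ = 1 := by
          rw [exp_neg, show 2 * log N = log (N ^ 2) by rw [log_pow]; norm_num,
            exp_log (by positivity)]
          field_simp
  · push_cast [n]
    linarith [Nat.ceil_lt_add_one (by positivity : 0 ≤ 2 * log N / δ)]

theorem le_sq_of_le_add_mul_log {M δ : ℝ} (hM : 1 ≤ M) (hδ0 : 0 < δ) (hδ1 : δ ≤ 1)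
    (h : M ≤ 2 * exp 1 + 2 * exp 1 / δ * log M) : M ≤ (6 * exp 1 / δ) ^ 2 := by
  set r := √M
  have hr : 1 ≤ r := one_le_sqrt.2 hM
  have hMr : M = r ^ 2 := (sq_sqrt (by linarith)).symm
  have hlog : log M ≤ 2 * r := by
    rw [hMr, log_pow]
    push_cast
    linarith [log_le_sub_one_of_pos (by linarith : 0 < r)]
  have he : 2 * exp 1 ≤ 2 * exp 1 / δ * r := by
    rw [div_mul_eq_mul_div, le_div_iff₀ hδ0]
    nlinarith [exp_pos 1]
  have hr6 : r ≤ 6 * exp 1 / δ := by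
    have : r ^ 2 ≤ 6 * exp 1 / δ * r := by
      have : 2 * exp 1 / δ * log M ≤ 2 * exp 1 / δ * (2 * r) := by gcongr
      rw [← hMr]
      linarith [show 6 * exp 1 / δ * r = 2 * exp 1 / δ * r + 2 * exp 1 / δ * (2 * r) by ring]
    nlinarith
  rw [hMr]
  gcongr

theorem le_pow_of_forall_sq_mul_pow_lt_one {N d : ℕ} (hN : 1 ≤ N) (hd : 1 ≤ d) {δ : ℝ}
    (hδ0 : 0 < δ) (hδ1 : δ < 1)
    (H : ∀ n : ℕ, d ≤ n → (N : ℝ) ^ 2 * (1 - δ) ^ n < 1 → (N : ℝ) ≤ (exp 1 * n / d) ^ d) :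
    (N : ℝ) ≤ (6 * exp 1 / δ) ^ (2 * d) := by
  obtain ⟨n, hdn, hlt, hn⟩ := exists_sq_mul_pow_lt_one hN hd hδ0 hδ1
  set M := exp 1 * n / d
  have hNM : (N : ℝ) ≤ M ^ d := H n hdn hlt
  have hd0 : (0 : ℝ) < d := by exact_mod_cast hd
  have he : 1 ≤ exp 1 := by linarith [add_one_le_exp (1 : ℝ)]
  have hM : 1 ≤ M := by
    rw [le_div_iff₀ hd0, one_mul]
    have : (d : ℝ) ≤ n := by exact_mod_cast hdn
    nlinarith
  have hlogN : log N ≤ d * log M := by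
    rw [← log_pow]
    exact log_le_log (by exact_mod_cast hN) hNM
  have hMle : M ≤ 2 * exp 1 + 2 * exp 1 / δ * log M :=
    calc M ≤ exp 1 * (d + 2 * log N / δ + 1) / d := by simp only [M]; gcongr
      _ = exp 1 + exp 1 / d + 2 * exp 1 / δ * (log N / d) := by field_simp; ring
      _ ≤ exp 1 + exp 1 + 2 * exp 1 / δ * log M := by
          gcongr
          · exact div_le_self (exp_pos 1).le (by exact_mod_cast hd)
          · rw [div_le_iff₀ hd0, mul_comm]
            exact hlogN
      _ = _ := by ring
  calc (N : ℝ) ≤ M ^ d := hNM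
    _ ≤ ((6 * exp 1 / δ) ^ 2) ^ d := by gcongr; exact le_sq_of_le_add_mul_log hM hδ0 hδ1.le hMle
    _ = _ := by rw [← pow_mul]

theorem exp_div_sq_pow_le_exp_div_pow {ε : ℝ} (hε0 : 0 < ε) (hε1 : ε < 1) (d : ℕ) :
    (24 * exp 1 / ε ^ 2) ^ (2 * d) ≤ (512 * exp 1 / ε) ^ (16 * d) := by
  have he : 1 ≤ exp 1 := by linarith [add_one_le_exp (1 : ℝ)]
  have hbase : 1 ≤ 512 * exp 1 / ε := by
    rw [le_div_iff₀ hε0]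
    linarith
  have hsq : 24 * exp 1 / ε ^ 2 ≤ (512 * exp 1 / ε) ^ 2 := by
    rw [div_pow, mul_pow]
    exact div_le_div_of_nonneg_right (by nlinarith) (by positivity)
  calc (24 * exp 1 / ε ^ 2) ^ (2 * d) ≤ ((512 * exp 1 / ε) ^ 2) ^ (2 * d) :=
        pow_le_pow_left₀ (by positivity) hsq _
    _ = (512 * exp 1 / ε) ^ (4 * d) := by rw [← pow_mul]; ring_nf
    _ ≤ _ := pow_le_pow_right₀ hbase (by omega)

end Arithmetic

theorem exists_finset_cover_of_card_separated_le {X : Type*} (ρ : X → X → ℝ)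
    (hρ : ∀ x y, ρ x y = ρ y x) {S : Set X} {r B : ℝ} (hρr : ∀ x, ρ x x < r)
    (hB : ∀ T : Finset X, (∀ x ∈ T, x ∈ S) → (∀ x ∈ T, ∀ y ∈ T, x ≠ y → r ≤ ρ x y) →
      (T.card : ℝ) ≤ B) :
    ∃ T : Finset X, (∀ x ∈ T, x ∈ S) ∧ (T.card : ℝ) ≤ B ∧ ∀ x ∈ S, ∃ y ∈ T, ρ x y < r := by
  classical
  let IsPacking : ℕ → Prop := fun k => ∃ T : Finset X, (∀ x ∈ T, x ∈ S) ∧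
    (∀ x ∈ T, ∀ y ∈ T, x ≠ y → r ≤ ρ x y) ∧ T.card = k
  have hbound : ∀ k, IsPacking k → k ≤ ⌊B⌋₊ := by
    rintro _ ⟨T, hTS, hsep, rfl⟩
    exact Nat.le_floor (hB T hTS hsep)
  obtain ⟨T, hTS, hsep, hcard⟩ := Nat.findGreatest_spec (P := IsPacking) (n := ⌊B⌋₊) (Nat.zero_le _)
    ⟨∅, by simp, by simp, rfl⟩
  refine ⟨T, hTS, hB T hTS hsep, fun x hx => ?_⟩
  by_contra! hfar
  have hxT : x ∉ T := fun h => (hfar x h).not_gt (hρr x)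
  have hlarger : IsPacking (T.card + 1) := by
    refine ⟨insert x T, ?_, ?_, Finset.card_insert_of_notMem hxT⟩
    · simpa [Finset.mem_insert] using And.intro hx hTS
    · simp only [Finset.mem_insert]
      rintro y (rfl | hy) z (rfl | hz) hyz
      · exact absurd rfl hyz
      · exact hfar z hz
      · exact hρ y z ▸ hfar y hy
      · exact hsep y hy z hz hyz
  have := Nat.le_findGreatest (hbound _ hlarger) hlarger
  omega

theorem abs_measureReal_sub_le_measureReal_symmDiff {α : Type*} [MeasurableSpace α]
    {μ : Measure α} [IsFiniteMeasure μ] (s t : Set α) :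
    |μ.real s - μ.real t| ≤ μ.real (s ∆ t) := by
  have key : ∀ s t : Set α, μ.real s ≤ μ.real (s ∆ t) + μ.real t := fun s t =>
    (measureReal_mono (le_symmDiff_sup_right s t)).trans (measureReal_union_le _ _)
  rw [abs_sub_le_iff]
  constructor
  · linarith [key s t]
  · rw [symmDiff_comm]
    linarith [key t s]

theorem measureReal_prod_eq_integral {α β : Type*} [MeasurableSpace α] [MeasurableSpace β]
    (μ : Measure α) (ν : Measure β) [IsFiniteMeasure μ] [IsFiniteMeasure ν] {s : Set (α × β)}
    (hs : MeasurableSet s) : (μ.prod ν).real s = ∫ x, ν.real (Prod.mk x ⁻¹' s) ∂μ := by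
  rw [measureReal_def, Measure.prod_apply hs, ← integral_toReal
    (measurable_measure_prodMk_left hs).aemeasurable (ae_of_all _ fun _ => measure_lt_top _ _)]
  rfl

section Hoeffding

open Set

variable {α : Type*} [MeasurableSpace α] (P : Measure α)

def hoeffdingIndicator (A : Set (α × α)) (q : α × α) : ℝ :=
  A.indicator 1 q - P.real (Prod.mk q.1 ⁻¹' A) - P.real ((·, q.2) ⁻¹' A) + (P.prod P).real A

def sectionSum (D : Set (α × α)) (q : α × α) : ℝ :=
  D.indicator 1 q + P.real (Prod.mk q.1 ⁻¹' D) + P.real ((·, q.2) ⁻¹' D) + (P.prod P).real D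

def dominatingMeasure (Q : Measure (α × α)) : Measure (α × α) :=
  Q + (Q.map Prod.fst).prod P + P.prod (Q.map Prod.snd) + P.prod P

theorem abs_hoeffdingIndicator_sub_le [IsFiniteMeasure P] (A A' : Set (α × α)) (q : α × α) :
    |hoeffdingIndicator P A q - hoeffdingIndicator P A' q| ≤ sectionSum P (A ∆ A') q := by
  have h₀ : |A.indicator (1 : α × α → ℝ) q - A'.indicator 1 q| ≤ (A ∆ A').indicator 1 q := by
    rw [← Set.apply_indicator_symmDiff abs_neg, abs_of_nonneg (indicator_nonneg (by simp) q)]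
  have h₁ := abs_measureReal_sub_le_measureReal_symmDiff (μ := P)
    (Prod.mk q.1 ⁻¹' A) (Prod.mk q.1 ⁻¹' A')
  have h₂ := abs_measureReal_sub_le_measureReal_symmDiff (μ := P)
    ((·, q.2) ⁻¹' A) ((·, q.2) ⁻¹' A')
  have h₃ := abs_measureReal_sub_le_measureReal_symmDiff (μ := P.prod P) A A'
  rw [← preimage_symmDiff] at h₁ h₂
  rw [hoeffdingIndicator, hoeffdingIndicator, sectionSum, abs_le] at *
  constructor <;> linarith [h₀.1, h₀.2, h₁.1, h₁.2, h₂.1, h₂.2, h₃.1, h₃.2]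

theorem sectionSum_le_four [IsProbabilityMeasure P] (D : Set (α × α)) (q : α × α) :
    sectionSum P D q ≤ 4 := by
  have : D.indicator (1 : α × α → ℝ) q ≤ 1 := by by_cases hq : q ∈ D <;> simp [hq]
  rw [sectionSum]
  linarith [measureReal_le_one (μ := P) (s := Prod.mk q.1 ⁻¹' D),
    measureReal_le_one (μ := P) (s := (·, q.2) ⁻¹' D), measureReal_le_one (μ := P.prod P) (s := D)]

variable (Q : Measure (α × α))

theorem lintegral_ofReal_sectionSum [IsFiniteMeasure P] [IsProbabilityMeasure Q] {D : Set (α × α)}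
    (hD : MeasurableSet D) :
    ∫⁻ q, ENNReal.ofReal (sectionSum P D q) ∂Q = dominatingMeasure P Q D := by
  have hpt : ∀ q, ENNReal.ofReal (sectionSum P D q) = D.indicator 1 q + P (Prod.mk q.1 ⁻¹' D)
      + P ((·, q.2) ⁻¹' D) + P.prod P D := fun q => by
    have hind : ENNReal.ofReal (D.indicator 1 q) = D.indicator 1 q := by
      by_cases hq : q ∈ D <;> simp [hq]
    have h₀ : 0 ≤ D.indicator (1 : α × α → ℝ) q := indicator_nonneg (by simp) q
    have h₁ := add_nonneg h₀ (measureReal_nonneg (μ := P) (s := Prod.mk q.1 ⁻¹' D))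
    have h₂ := add_nonneg h₁ (measureReal_nonneg (μ := P) (s := (·, q.2) ⁻¹' D))
    rw [sectionSum, ENNReal.ofReal_add h₂ measureReal_nonneg,
      ENNReal.ofReal_add h₁ measureReal_nonneg, ENNReal.ofReal_add h₀ measureReal_nonneg, hind,
      ofReal_measureReal, ofReal_measureReal, ofReal_measureReal]
  have hleft : Measurable fun q : α × α => P (Prod.mk q.1 ⁻¹' D) :=
    (measurable_measure_prodMk_left hD).comp measurable_fst
  have hright : Measurable fun q : α × α => P ((·, q.2) ⁻¹' D) :=
    (measurable_measure_prodMk_right hD).comp measurable_snd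
  simp_rw [hpt]
  rw [lintegral_add_right _ measurable_const, lintegral_add_right _ hright,
    lintegral_add_right _ hleft, lintegral_indicator_one hD, lintegral_const, measure_univ, mul_one,
    ← lintegral_map (measurable_measure_prodMk_left hD) measurable_fst, ← Measure.prod_apply hD,
    ← lintegral_map (measurable_measure_prodMk_right hD) measurable_snd,
    ← Measure.prod_apply_symm hD]
  simp [dominatingMeasure]

theorem dominatingMeasure_univ [IsProbabilityMeasure P] [IsProbabilityMeasure Q] :
    dominatingMeasure P Q univ = 4 := by
  have : IsProbabilityMeasure (Q.map Prod.fst) :=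
    Measure.isProbabilityMeasure_map measurable_fst.aemeasurable
  have : IsProbabilityMeasure (Q.map Prod.snd) :=
    Measure.isProbabilityMeasure_map measurable_snd.aemeasurable
  simp only [dominatingMeasure, Measure.coe_add, Pi.add_apply, measure_univ]
  norm_num

instance [IsFiniteMeasure P] [IsFiniteMeasure Q] : IsFiniteMeasure (dominatingMeasure P Q) := by
  unfold dominatingMeasure
  infer_instance

theorem integral_sq_half_hoeffdingIndicator_sub_le [IsProbabilityMeasure P]
    [IsProbabilityMeasure Q] {A A' : Set (α × α)} (hA : MeasurableSet A)
    (hA' : MeasurableSet A') :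
    ∫ q, (2⁻¹ * hoeffdingIndicator P A q - 2⁻¹ * hoeffdingIndicator P A' q) ^ 2 ∂Q
      ≤ (dominatingMeasure P Q).real (A ∆ A') := by
  have hpt : ∀ q, ‖(2⁻¹ * hoeffdingIndicator P A q - 2⁻¹ * hoeffdingIndicator P A' q) ^ 2‖
      ≤ sectionSum P (A ∆ A') q := fun q => by
    have h := abs_hoeffdingIndicator_sub_le P A A' q
    have h4 := sectionSum_le_four P (A ∆ A') q
    rw [Real.norm_of_nonneg (sq_nonneg _)]
    nlinarith [abs_nonneg (hoeffdingIndicator P A q - hoeffdingIndicator P A' q),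
      sq_abs (hoeffdingIndicator P A q - hoeffdingIndicator P A' q)]
  have hint := lintegral_ofReal_sectionSum P Q (hA.symmDiff hA')
  calc _ ≤ ‖∫ q, (2⁻¹ * hoeffdingIndicator P A q - 2⁻¹ * hoeffdingIndicator P A' q) ^ 2 ∂Q‖ :=
        Real.le_norm_self _
    _ ≤ _ := norm_integral_le_lintegral_norm _
    _ ≤ (∫⁻ q, ENNReal.ofReal (sectionSum P (A ∆ A') q) ∂Q).toReal :=
        ENNReal.toReal_mono (by rw [hint]; finiteness)
          (lintegral_mono fun q => ENNReal.ofReal_le_ofReal (hpt q))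
    _ = _ := by rw [hint]; rfl

end Hoeffding

section RankKernel

open Finset

variable {p : ℕ}

def agreeSet (β : Fin p → ℝ) : Set (Obs p × Obs p) :=
  {q | q.2.1 < q.1.1 ↔ q.2.2.1 + dot q.2.2.2 β < q.1.2.1 + dot q.1.2.2 β}

theorem fker_eq_indicator (β : Fin p → ℝ) (w w' : Obs p) :
    fker β w w' = (agreeSet β).indicator 1 (w, w') := by
  by_cases h₁ : w'.1 < w.1 <;> by_cases h₂ : w'.2.1 + dot w'.2.2 β < w.2.1 + dot w.2.2 β <;>
    simp [fker, Rrule, agreeSet, h₁, h₂]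

theorem measurableSet_agreeSet (β : Fin p → ℝ) : MeasurableSet (agreeSet β) := by
  simp only [agreeSet, measurableSet_setOfPred, dot]
  fun_prop

theorem hker_eq_hoeffdingIndicator (P : Measure (Obs p)) [IsFiniteMeasure P]
    (β : Fin p → ℝ) (w w' : Obs p) :
    hker P β w w' = hoeffdingIndicator P (agreeSet β) (w, w') := by
  have hA := measurableSet_agreeSet β
  have hleft : ∀ w, ∫ v, fker β w v ∂P = P.real (Prod.mk w ⁻¹' agreeSet β) := fun w => by
    simp_rw [fker_eq_indicator]
    exact integral_indicator_one (measurable_prodMk_left hA)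
  have hright : ∀ w', ∫ v, fker β v w' ∂P = P.real ((·, w') ⁻¹' agreeSet β) := fun w' => by
    simp_rw [fker_eq_indicator]
    exact integral_indicator_one (measurable_prodMk_right hA)
  rw [hker, Spop, hoeffdingIndicator, fker_eq_indicator, hleft, hright,
    measureReal_prod_eq_integral P P hA]
  simp only [hleft]

theorem dot_eq_sum_of_mem_Bm {m : Finset (Fin p)} {β : Fin p → ℝ} (hβ : β ∈ Bm m)
    (u : Fin p → ℝ) : dot u β = ∑ j : m, u j * β j := by
  rw [dot, sum_coe_sort m (fun j => u j * β j)]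
  exact (sum_subset (subset_univ m) fun j _ hj => by simp [hβ j hj]).symm

def pairDiff (m : Finset (Fin p)) (q : Obs p × Obs p) : Option m → ℝ :=
  fun o => o.elim (q.1.2.1 - q.2.2.1) fun j => q.1.2.2 j - q.2.2.2 j

def homogenize (m : Finset (Fin p)) (β : Fin p → ℝ) : Option m → ℝ :=
  fun o => o.elim 1 fun j => β j

theorem mem_agreeSet_iff {m : Finset (Fin p)} {β : Fin p → ℝ} (hβ : β ∈ Bm m)
    (q : Obs p × Obs p) :
    q ∈ agreeSet β ↔ (q.2.1 < q.1.1 ↔ 0 < pairDiff m q ⬝ᵥ homogenize m β) := by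
  have : pairDiff m q ⬝ᵥ homogenize m β
      = (q.1.2.1 + dot q.1.2.2 β) - (q.2.2.1 + dot q.2.2.2 β) := by
    simp only [dotProduct, Fintype.sum_option, pairDiff, homogenize, Option.elim,
      dot_eq_sum_of_mem_Bm hβ, sub_mul, sum_sub_distrib]
    ring
  rw [this, sub_pos]
  rfl

theorem card_le_sum_choose_of_separating_sample {m : Finset (Fin p)} {T : Finset (Fin p → ℝ)}
    (hT : ∀ β ∈ T, β ∈ Bm m) {n : ℕ} (x : Fin n → Obs p × Obs p)
    (hx : ∀ β ∈ T, ∀ β' ∈ T, β ≠ β' → ∃ k, x k ∈ agreeSet β ∆ agreeSet β') :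
    #T ≤ ∑ k ∈ Iic (#m + 1), n.choose k := by
  classical
  set pattern : (Fin p → ℝ) → Finset (Fin n) :=
    fun β => univ.filter fun k => 0 < pairDiff m (x k) ⬝ᵥ homogenize m β
  have hinj : Set.InjOn pattern T := by
    intro β hβ β' hβ' hpat
    by_contra hne
    obtain ⟨k, hk⟩ := hx β hβ β' hβ' hne
    have hsign : 0 < pairDiff m (x k) ⬝ᵥ homogenize m β ↔
        0 < pairDiff m (x k) ⬝ᵥ homogenize m β' := by
      simpa [pattern] using congrArg (k ∈ ·) hpat
    rw [Set.mem_symmDiff, mem_agreeSet_iff (hT β hβ), mem_agreeSet_iff (hT β' hβ'), hsign] at hk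
    tauto
  have hvc : (T.image pattern).vcDim ≤ #m + 1 := by
    refine (vcDim_le_card_of_halfspaces (c := fun k => pairDiff m (x k)) ?_).trans_eq (by simp)
    intro A hA
    obtain ⟨β, -, rfl⟩ := mem_image.1 hA
    exact ⟨homogenize m β, by simp [pattern]⟩
  calc #T = #(T.image pattern) := (card_image_of_injOn hinj).symm
    _ ≤ #(T.image pattern).shatterer := card_le_card_shatterer _
    _ ≤ ∑ k ∈ Iic (T.image pattern).vcDim, (Fintype.card (Fin n)).choose k :=
        card_shatterer_le_sum_vcDim
    _ ≤ _ := by simpa using sum_le_sum_of_subset (Iic_subset_Iic.2 hvc)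

theorem card_le_of_separated (P : Measure (Obs p)) [IsProbabilityMeasure P]
    (Q : Measure (Obs p × Obs p)) [IsProbabilityMeasure Q] {m : Finset (Fin p)}
    {T : Finset (Fin p → ℝ)} (hT : ∀ β ∈ T, β ∈ Bm m) {ε : ℝ} (hε0 : 0 < ε) (hε1 : ε < 1)
    (hsep : ∀ β ∈ T, ∀ β' ∈ T, β ≠ β' →
      ε ^ 2 ≤ (dominatingMeasure P Q).real (agreeSet β ∆ agreeSet β')) :
    (#T : ℝ) ≤ (24 * Real.exp 1 / ε ^ 2) ^ (2 * (#m + 1)) := by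
  rcases Nat.eq_zero_or_pos #T with hT0 | hT0
  · rw [hT0, Nat.cast_zero]
    positivity
  set δ := ε ^ 2 / 4
  have hδ0 : 0 < δ := by positivity
  have hδ1 : δ < 1 := by simp only [δ]; nlinarith
  let μ : Measure (Obs p × Obs p) := (4 : ENNReal)⁻¹ • dominatingMeasure P Q
  have hμ : ∀ s, μ.real s = (dominatingMeasure P Q).real s / 4 := fun s => by
    simp [μ, measureReal_def, ENNReal.toReal_inv, div_eq_inv_mul]
  have : IsProbabilityMeasure μ := ⟨by simp [μ, dominatingMeasure_univ, ENNReal.inv_mul_cancel]⟩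
  have h24 : 24 * Real.exp 1 / ε ^ 2 = 6 * Real.exp 1 / δ := by simp only [δ]; field_simp; ring
  rw [h24]
  refine le_pow_of_forall_sq_mul_pow_lt_one hT0 (Nat.le_add_left 1 _) hδ0 hδ1 fun n hdn hn => ?_
  obtain ⟨x, hx⟩ := exists_separating_sample μ
    (D := fun β β' : T => agreeSet β.1 ∆ agreeSet β'.1)
    (fun _ _ => (measurableSet_agreeSet _).symmDiff (measurableSet_agreeSet _)) (δ := δ)
    (fun β β' hne => by
      rw [hμ]
      simp only [δ]
      linarith [hsep β β.2 β' β'.2 (Subtype.coe_ne_coe.2 hne)])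
    hδ1.le (by simpa using hn)
  calc (#T : ℝ) ≤ ∑ k ∈ Iic (#m + 1), (n.choose k : ℝ) := by
        exact_mod_cast card_le_sum_choose_of_separating_sample hT x
          fun β hβ β' hβ' hne => hx ⟨β, hβ⟩ ⟨β', hβ'⟩ (by simpa using hne)
    _ ≤ _ := sum_Iic_choose_le_exp_mul_div_pow (Nat.le_add_left 1 _) hdn

end RankKernel

/-- `L₂(Q)` covering-number bound for the class `H_m = {2⁻¹ h_β : β ∈ B_m}`:
there is a universal constant `C₄ ≥ 1` with
`N(ε, H_m, L₂(Q)) ≤ (512·e·C₄/ε)^{16s+16}` for every `ε ∈ (0,1)`. -/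
theorem covering_number_Hm :
    ∃ C₄ : ℝ, 1 ≤ C₄ ∧
      ∀ (p s : ℕ), 1 ≤ p → 1 ≤ s →
      ∀ m : Finset (Fin p), m.card = s →
      ∀ P : Measure (Obs p), IsProbabilityMeasure P →
      ∀ Q : Measure (Obs p × Obs p), IsProbabilityMeasure Q →
      ∀ ε : ℝ, 0 < ε → ε < 1 →
      ∃ G : Finset ((Obs p × Obs p) → ℝ),
        (G.card : ℝ) ≤ (512 * Real.exp 1 * C₄ / ε) ^ (16 * s + 16) ∧
        ∀ β ∈ Bm m, ∃ γ ∈ G,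
          (∫ q, (2⁻¹ * hker P β q.1 q.2 - γ q) ^ 2 ∂Q) < ε ^ 2 := by
  classical
  refine ⟨1, le_rfl, fun p s _ _ m hm P _ Q _ ε hε0 hε1 => ?_⟩
  obtain ⟨T, -, hTcard, hcover⟩ := exists_finset_cover_of_card_separated_le
    (fun β β' => (dominatingMeasure P Q).real (agreeSet β ∆ agreeSet β'))
    (fun β β' => by rw [symmDiff_comm]) (S := Bm m) (r := ε ^ 2)
    (fun β => by simpa using pow_pos hε0 2)
    (fun T hT hsep => card_le_of_separated P Q hT hε0 hε1 hsep)
  refine ⟨T.image fun β q => 2⁻¹ * hker P β q.1 q.2, ?_, fun β hβ => ?_⟩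
  · calc ((T.image _).card : ℝ) ≤ T.card := by exact_mod_cast Finset.card_image_le
      _ ≤ (24 * Real.exp 1 / ε ^ 2) ^ (2 * (s + 1)) := hm ▸ hTcard
      _ ≤ (512 * Real.exp 1 * 1 / ε) ^ (16 * s + 16) := by
        rw [mul_one, show 16 * s + 16 = 16 * (s + 1) by ring]
        exact exp_div_sq_pow_le_exp_div_pow hε0 hε1 _
  · obtain ⟨β', hβ', hlt⟩ := hcover β hβ
    refine ⟨_, Finset.mem_image_of_mem _ hβ', lt_of_le_of_lt ?_ hlt⟩
    simp only [hker_eq_hoeffdingIndicator]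
    exact integral_sq_half_hoeffdingIndicator_sub_le P Q (measurableSet_agreeSet β)
      (measurableSet_agreeSet β')

end RankCoverH
end
end

section
/- Let n ≥ 2, let (y₁, x₁), …, (y_n, x_n) ∈ ℝ × ℝ^k be data, let B ⊆ ℝ^k be a nonempty compact set, let ε > 0, and for i ≠ j set x_{ij} := x_i − x_j and M_{ij} := max_{β ∈ B} |x_{ij}'β| + ε. Consider the MRC objective Q(β) := (1/(n(n−1))) Σ_{i≠j} 1{x_{ij}'β > 0}·1{y_i > y_j} and the MIP objective over pairs (β, d) with β ∈ B, d_{ij} ∈ {0,1}, and (d_{ij} − 1)·M_{ij} < x_{ij}'β ≤ d_{ij}·M_{ij} for all i ≠ j, given by L(β, d) := (1/(n(n−1))) Σ_{i≠j} d_{ij}·1{y_i > y_j}. Then: (i) for any feasible (β, d), d_{ij} = 1{x_{ij}'β > 0} for all i ≠ j, and L(β, d) = Q(β); (ii) sup over feasible (β, d) of L equals sup_{β ∈ B} Q(β); and (iii) both suprema are attained, and (β̂, d̂) maximizes L over the feasible set if and only if β̂ maximizes Q over B and d̂_{ij} = 1{x_{ij}'β̂ > 0}. -/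
/-! Since `|x_{ij}'β| < M_{ij}` on `B`, the big-M constraints leave exactly one admissible value
for each binary `d_{ij}`, namely `1{x_{ij}'β > 0}`. So every `β ∈ B` extends to a feasible point, every feasible point
has `L(β, d) = Q(β)`, and the two problems have the same set of values. That set is finite, as
`Q(β)` only sees the sign pattern of the `x_{ij}'β`, so the maxima are attained. -/

noncomputable section

namespace MrcMip

/-- Euclidean inner product on `ℝ^k`. -/
def dot {k : ℕ} (a b : Fin k → ℝ) : ℝ := ∑ h, a h * b h

/-- The MRC (Kendall rank correlation) objective
`Q(β) = (1/(n(n−1))) Σ_{i≠j} 1{x_{ij}'β > 0} · 1{y_i > y_j}`. -/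
def Qobj {n k : ℕ} (y : Fin n → ℝ) (x : Fin n → Fin k → ℝ)
    (β : Fin k → ℝ) : ℝ :=
  (1 / ((n : ℝ) * ((n : ℝ) - 1))) *
    ∑ i, ∑ j, if i ≠ j then
      (if 0 < dot (fun h => x i h - x j h) β then (1 : ℝ) else 0) *
        (if y j < y i then (1 : ℝ) else 0)
    else 0

/-- The MIP objective `L(β, d) = (1/(n(n−1))) Σ_{i≠j} d_{ij} · 1{y_i > y_j}`. -/
def Lobj {n k : ℕ} (y : Fin n → ℝ)
    (bd : (Fin k → ℝ) × (Fin n → Fin n → ℝ)) : ℝ :=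
  (1 / ((n : ℝ) * ((n : ℝ) - 1))) *
    ∑ i, ∑ j, if i ≠ j then bd.2 i j * (if y j < y i then (1 : ℝ) else 0) else 0

/-- The MIP feasible set: `β ∈ B`, `d_{ij} ∈ {0,1}` and the big-M constraints
`(d_{ij} − 1)·M_{ij} < x_{ij}'β ≤ d_{ij}·M_{ij}` for all `i ≠ j`. -/
def Feas {n k : ℕ} (x : Fin n → Fin k → ℝ) (B : Set (Fin k → ℝ))
    (M : Fin n → Fin n → ℝ) : Set ((Fin k → ℝ) × (Fin n → Fin n → ℝ)) :=
  {bd | bd.1 ∈ B ∧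
    (∀ i j, i ≠ j → (bd.2 i j = 0 ∨ bd.2 i j = 1)) ∧
    (∀ i j, i ≠ j →
      (bd.2 i j - 1) * M i j < dot (fun h => x i h - x j h) bd.1 ∧
        dot (fun h => x i h - x j h) bd.1 ≤ bd.2 i j * M i j)}

def pairIndicator {n k : ℕ} (x : Fin n → Fin k → ℝ) (β : Fin k → ℝ) : Fin n → Fin n → ℝ :=
  fun i j => if 0 < dot (fun h => x i h - x j h) β then 1 else 0

theorem continuous_dot {k : ℕ} (v : Fin k → ℝ) : Continuous (dot v) := by
  unfold dot
  fun_prop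

theorem eq_ite_pos_of_bigM {d m t : ℝ} (hd : d = 0 ∨ d = 1)
    (hlo : (d - 1) * m < t) (hhi : t ≤ d * m) : d = if 0 < t then 1 else 0 := by
  rcases hd with rfl | rfl
  · simp only [zero_mul] at hhi
    simp [hhi.not_gt]
  · simp only [sub_self, zero_mul] at hlo
    simp [hlo]

theorem bigM_of_abs_lt {m t : ℝ} (ht : |t| < m) :
    ((if 0 < t then 1 else 0) - 1) * m < t ∧ t ≤ (if 0 < t then 1 else 0) * m := by
  split_ifs with h
  · exact ⟨by simpa using h, by linarith [le_abs_self t]⟩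
  · exact ⟨by linarith [neg_abs_le t], by simpa using h⟩

section Feasibility

variable {n k : ℕ} {x : Fin n → Fin k → ℝ} {B : Set (Fin k → ℝ)} {M : Fin n → Fin n → ℝ}

theorem snd_eq_pairIndicator_of_mem_Feas {bd : (Fin k → ℝ) × (Fin n → Fin n → ℝ)}
    (hbd : bd ∈ Feas x B M) {i j : Fin n} (hij : i ≠ j) :
    bd.2 i j = pairIndicator x bd.1 i j :=
  eq_ite_pos_of_bigM (hbd.2.1 i j hij) (hbd.2.2 i j hij).1 (hbd.2.2 i j hij).2

theorem Lobj_eq_Qobj_of_mem_Feas (y : Fin n → ℝ) {bd : (Fin k → ℝ) × (Fin n → Fin n → ℝ)}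
    (hbd : bd ∈ Feas x B M) : Lobj y bd = Qobj y x bd.1 := by
  unfold Lobj Qobj
  congr 1
  refine Finset.sum_congr rfl fun i _ => Finset.sum_congr rfl fun j _ =>
    ite_congr rfl (fun hij => ?_) fun _ => rfl
  rw [snd_eq_pairIndicator_of_mem_Feas hbd hij, pairIndicator]

variable {ε : ℝ}

theorem abs_dot_lt_of_mem (hB : IsCompact B) (hε : 0 < ε)
    (hM : ∀ i j, M i j = sSup ((fun β => |dot (fun h => x i h - x j h) β|) '' B) + ε)
    {β : Fin k → ℝ} (hβ : β ∈ B) (i j : Fin n) :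
    |dot (fun h => x i h - x j h) β| < M i j := by
  have hbdd := hB.bddAbove_image (continuous_dot (fun h => x i h - x j h)).abs.continuousOn
  rw [hM]
  linarith [le_csSup hbdd (Set.mem_image_of_mem _ hβ)]

theorem mk_pairIndicator_mem_Feas (hB : IsCompact B) (hε : 0 < ε)
    (hM : ∀ i j, M i j = sSup ((fun β => |dot (fun h => x i h - x j h) β|) '' B) + ε)
    {β : Fin k → ℝ} (hβ : β ∈ B) : (β, pairIndicator x β) ∈ Feas x B M := by
  refine ⟨hβ, fun i j _ => ?_, fun i j _ => bigM_of_abs_lt (abs_dot_lt_of_mem hB hε hM hβ i j)⟩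
  dsimp only [pairIndicator]
  split_ifs <;> simp

theorem image_Lobj_Feas (y : Fin n → ℝ) (hB : IsCompact B) (hε : 0 < ε)
    (hM : ∀ i j, M i j = sSup ((fun β => |dot (fun h => x i h - x j h) β|) '' B) + ε) :
    Lobj y '' Feas x B M = Qobj y x '' B := by
  ext r
  constructor
  · rintro ⟨bd, hbd, rfl⟩
    exact ⟨bd.1, hbd.1, (Lobj_eq_Qobj_of_mem_Feas y hbd).symm⟩
  · rintro ⟨β, hβ, rfl⟩
    have hfeas := mk_pairIndicator_mem_Feas hB hε hM hβ
    exact ⟨_, hfeas, Lobj_eq_Qobj_of_mem_Feas y hfeas⟩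

end Feasibility

theorem Qobj_eq_Lobj_pairIndicator {n k : ℕ} (y : Fin n → ℝ) (x : Fin n → Fin k → ℝ)
    (β : Fin k → ℝ) : Qobj y x β = Lobj y (β, pairIndicator x β) :=
  rfl

theorem finite_range_Qobj {n k : ℕ} (y : Fin n → ℝ) (x : Fin n → Fin k → ℝ) :
    (Set.range (Qobj y x)).Finite := by
  let ofBool : (Fin n → Fin n → Bool) → ℝ :=
    fun s => Lobj y ((0 : Fin k → ℝ), fun i j => if s i j then 1 else 0)
  refine (Set.finite_range ofBool).subset ?_
  rintro _ ⟨β, rfl⟩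
  refine ⟨fun i j => decide (0 < dot (fun h => x i h - x j h) β), ?_⟩
  simp only [ofBool, Qobj_eq_Lobj_pairIndicator, decide_eq_true_eq]
  rfl

theorem exists_max_Qobj {n k : ℕ} (y : Fin n → ℝ) (x : Fin n → Fin k → ℝ)
    {B : Set (Fin k → ℝ)} (hB : B.Nonempty) :
    ∃ β ∈ B, ∀ β' ∈ B, Qobj y x β' ≤ Qobj y x β := by
  obtain ⟨_, ⟨β, hβ, rfl⟩, hmax⟩ := Set.exists_max_image (Qobj y x '' B) id
    ((finite_range_Qobj y x).subset (Set.image_subset_range _ _)) (hB.image _)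
  exact ⟨β, hβ, fun β' hβ' => hmax _ (Set.mem_image_of_mem _ hβ')⟩

theorem mrc_mip_equivalence_general (n k : ℕ)
    (y : Fin n → ℝ) (x : Fin n → Fin k → ℝ)
    (B : Set (Fin k → ℝ)) (hBne : B.Nonempty) (hBcp : IsCompact B)
    (ε : ℝ) (hε : 0 < ε)
    (M : Fin n → Fin n → ℝ)
    (hM : ∀ i j, M i j =
      sSup ((fun β => |dot (fun h => x i h - x j h) β|) '' B) + ε) :
    (∀ bd ∈ Feas x B M,
        (∀ i j, i ≠ j → bd.2 i j =
          (if 0 < dot (fun h => x i h - x j h) bd.1 then (1 : ℝ) else 0)) ∧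
        Lobj y bd = Qobj y x bd.1) ∧
    sSup (Lobj y '' Feas x B M) = sSup (Qobj y x '' B) ∧
    (∃ bd ∈ Feas x B M, ∀ bd' ∈ Feas x B M, Lobj y bd' ≤ Lobj y bd) ∧
    (∃ β ∈ B, ∀ β' ∈ B, Qobj y x β' ≤ Qobj y x β) ∧
    (∀ bd ∈ Feas x B M,
      ((∀ bd' ∈ Feas x B M, Lobj y bd' ≤ Lobj y bd) ↔
        ((∀ β' ∈ B, Qobj y x β' ≤ Qobj y x bd.1) ∧
          ∀ i j, i ≠ j → bd.2 i j =
            (if 0 < dot (fun h => x i h - x j h) bd.1 then (1 : ℝ) else 0)))) := by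
  have himage := image_Lobj_Feas y hBcp hε hM
  -- a feasible point maximizes `L` iff its value bounds `L '' Feas = Q '' B`
  have hmax_iff : ∀ bd ∈ Feas x B M, (∀ bd' ∈ Feas x B M, Lobj y bd' ≤ Lobj y bd) ↔
      ∀ β' ∈ B, Qobj y x β' ≤ Qobj y x bd.1 := fun bd hbd => by
    rw [Lobj_eq_Qobj_of_mem_Feas y hbd,
      ← Set.forall_mem_image (f := Lobj y) (p := (· ≤ Qobj y x bd.1)), himage,
      Set.forall_mem_image]
  obtain ⟨β, hβ, hQmax⟩ := exists_max_Qobj y x hBne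
  have hfeas := mk_pairIndicator_mem_Feas hBcp hε hM hβ
  refine ⟨fun bd hbd => ⟨fun i j => snd_eq_pairIndicator_of_mem_Feas hbd,
      Lobj_eq_Qobj_of_mem_Feas y hbd⟩, congrArg sSup himage,
    ⟨_, hfeas, (hmax_iff _ hfeas).2 hQmax⟩, ⟨β, hβ, hQmax⟩, fun bd hbd => ?_⟩
  rw [hmax_iff bd hbd]
  exact ⟨fun h => ⟨h, fun i j => snd_eq_pairIndicator_of_mem_Feas hbd⟩, And.left⟩

/-- **Equivalence of the MRC problem and its MIP reformulation**: with
`M_{ij} = max_{β ∈ B} |x_{ij}'β| + ε`, (i) every feasible `(β, d)` has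
`d_{ij} = 1{x_{ij}'β > 0}` and `L(β, d) = Q(β)`; (ii) the optimal values agree;
(iii) both suprema are attained, and a feasible `(β̂, d̂)` maximizes `L` iff `β̂`
maximizes `Q` over `B` and `d̂_{ij} = 1{x_{ij}'β̂ > 0}` for all `i ≠ j`. -/
theorem mrc_mip_equivalence (n k : ℕ) (hn : 2 ≤ n)
    (y : Fin n → ℝ) (x : Fin n → Fin k → ℝ)
    (B : Set (Fin k → ℝ)) (hBne : B.Nonempty) (hBcp : IsCompact B)
    (ε : ℝ) (hε : 0 < ε)
    (M : Fin n → Fin n → ℝ)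
    (hM : ∀ i j, M i j =
      sSup ((fun β => |dot (fun h => x i h - x j h) β|) '' B) + ε) :
    (∀ bd ∈ Feas x B M,
        (∀ i j, i ≠ j → bd.2 i j =
          (if 0 < dot (fun h => x i h - x j h) bd.1 then (1 : ℝ) else 0)) ∧
        Lobj y bd = Qobj y x bd.1) ∧
    sSup (Lobj y '' Feas x B M) = sSup (Qobj y x '' B) ∧
    (∃ bd ∈ Feas x B M, ∀ bd' ∈ Feas x B M, Lobj y bd' ≤ Lobj y bd) ∧
    (∃ β ∈ B, ∀ β' ∈ B, Qobj y x β' ≤ Qobj y x β) ∧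
    (∀ bd ∈ Feas x B M,
      ((∀ bd' ∈ Feas x B M, Lobj y bd' ≤ Lobj y bd) ↔
        ((∀ β' ∈ B, Qobj y x β' ≤ Qobj y x bd.1) ∧
          ∀ i j, i ≠ j → bd.2 i j =
            (if 0 < dot (fun h => x i h - x j h) bd.1 then (1 : ℝ) else 0)))) :=
  mrc_mip_equivalence_general n k y x B hBne hBcp ε hε M hM

end MrcMip
end
end

section
/- Let n ≥ 2, let (y₁, x₁), …, (y_n, x_n) ∈ ℝ × ℝ^{1+p} with x_i = (x_{1,i}, x_{−1,i}), x_{−1,i} ∈ ℝ^p, let s ≥ 0 be an integer, let lb, ub ∈ ℝ^p with lb_h ≤ 0 ≤ ub_h for all h, and let B := {β ∈ ℝ^p : lb_h ≤ β_h ≤ ub_h ∀h}. For i ≠ j set x_{−1,ij} := x_{−1,i} − x_{−1,j} and let M_{ij} > sup_{β ∈ B} |(x_{1,i} − x_{1,j}) + x_{−1,ij}'β|. Consider the constrained MIP over (β, d, e) with β ∈ B, d_{ij} ∈ {0,1}, e_h ∈ {0,1}, satisfying (d_{ij} − 1)M_{ij} < (x_{1,i} − x_{1,j}) + x_{−1,ij}'β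 ≤ d_{ij}M_{ij} for all i ≠ j, e_h·lb_h ≤ β_h ≤ e_h·ub_h for all h, and Σ_{h=1}^p e_h ≤ s, with objective L(β, d) := (2/(n(n−1))) Σ_{i<j} [ (1 − 1{y_i > y_j}) + (2·1{y_i > y_j} − 1)·d_{ij} ]. Then for any feasible (β, d, e): ‖β‖₀ ≤ s, d_{ij} = R_β(x_i, x_j), and L(β, d) = S_n(β); consequently the optimal value of the constrained MIP equals max over {β ∈ B : ‖β‖₀ ≤ s} of S_n(β), and the β-component of any MIP maximizer maximizes S_n over {β ∈ B : ‖β‖₀ ≤ s}. -/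
/-!
Since `|margin| < M_{ij}` on the box, the big-M constraints pin each binary `d_{ij}` to
`1{margin > 0} = R_β(x_i, x_j)`, and `e_h * lb_h ≤ β_h ≤ e_h * ub_h` forces `e_h = 1` on the support
of `β`. Hence every feasible point projects into `{β ∈ B : ‖β‖₀ ≤ s}` with `L = S_n`, and every such
`β` lifts back. The maximum of `S_n` is attained because `S_n` only takes finitely many values.
-/

noncomputable section

namespace BestSubsetMip

/-- Euclidean inner product on `ℝ^p`. -/
def dot {p : ℕ} (a b : Fin p → ℝ) : ℝ := ∑ h, a h * b h

/-- The rank prediction rule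
`R_β(x_i, x_j) = 1{x_{1,i} + x_{−1,i}'β > x_{1,j} + x_{−1,j}'β}` applied to
observations `i, j`. -/
def Rind {n p : ℕ} (x1 : Fin n → ℝ) (xm1 : Fin n → Fin p → ℝ)
    (β : Fin p → ℝ) (i j : Fin n) : ℝ :=
  if x1 j + dot (xm1 j) β < x1 i + dot (xm1 i) β then 1 else 0

/-- The sample best-subset rank prediction criterion
`S_n(β) = (2/(n(n−1))) Σ_{i<j} 1{ 1{y_i > y_j} = R_β(x_i, x_j) }`. -/
def Sn {n p : ℕ} (y : Fin n → ℝ) (x1 : Fin n → ℝ) (xm1 : Fin n → Fin p → ℝ)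
    (β : Fin p → ℝ) : ℝ :=
  (2 / ((n : ℝ) * ((n : ℝ) - 1))) *
    ∑ i, ∑ j, if i < j then
      (if (if y j < y i then (1 : ℝ) else 0) = Rind x1 xm1 β i j then (1 : ℝ)
       else 0)
    else 0

/-- The MIP objective
`L(β, d) = (2/(n(n−1))) Σ_{i<j} [(1 − 1{y_i>y_j}) + (2·1{y_i>y_j} − 1)·d_{ij}]`. -/
def Lobj {n p : ℕ} (y : Fin n → ℝ)
    (bde : (Fin p → ℝ) × (Fin n → Fin n → ℝ) × (Fin p → ℝ)) : ℝ :=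
  (2 / ((n : ℝ) * ((n : ℝ) - 1))) *
    ∑ i, ∑ j, if i < j then
      ((1 - (if y j < y i then (1 : ℝ) else 0)) +
        (2 * (if y j < y i then (1 : ℝ) else 0) - 1) * bde.2.1 i j)
    else 0

/-- The box parameter space `B = {β : lb_h ≤ β_h ≤ ub_h ∀h}`. -/
def Box {p : ℕ} (lb ub : Fin p → ℝ) : Set (Fin p → ℝ) :=
  {β | ∀ h, lb h ≤ β h ∧ β h ≤ ub h}

/-- The constrained MIP feasible set over triples `(β, d, e)`. -/
def Feas {n p : ℕ} (x1 : Fin n → ℝ) (xm1 : Fin n → Fin p → ℝ)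
    (lb ub : Fin p → ℝ) (M : Fin n → Fin n → ℝ) (s : ℕ) :
    Set ((Fin p → ℝ) × (Fin n → Fin n → ℝ) × (Fin p → ℝ)) :=
  {bde | bde.1 ∈ Box lb ub ∧
    (∀ i j : Fin n, i ≠ j → (bde.2.1 i j = 0 ∨ bde.2.1 i j = 1)) ∧
    (∀ h, bde.2.2 h = 0 ∨ bde.2.2 h = 1) ∧
    (∀ i j : Fin n, i ≠ j →
      (bde.2.1 i j - 1) * M i j <
          (x1 i - x1 j) + dot (fun h => xm1 i h - xm1 j h) bde.1 ∧
        (x1 i - x1 j) + dot (fun h => xm1 i h - xm1 j h) bde.1 ≤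
          bde.2.1 i j * M i j) ∧
    (∀ h, bde.2.2 h * lb h ≤ bde.1 h ∧ bde.1 h ≤ bde.2.2 h * ub h) ∧
    (∑ h, bde.2.2 h) ≤ (s : ℝ)}

/-- The ℓ₀-constrained parameter set `{β ∈ B : ‖β‖₀ ≤ s}`. -/
def BoxS {p : ℕ} (lb ub : Fin p → ℝ) (s : ℕ) : Set (Fin p → ℝ) :=
  {β | β ∈ Box lb ub ∧ (Finset.univ.filter fun h => β h ≠ 0).card ≤ s}

/-- The quantity `(x_{1,i} − x_{1,j}) + x_{−1,ij}'β` bounded by the big-M constraints. -/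
def margin {n p : ℕ} (x1 : Fin n → ℝ) (xm1 : Fin n → Fin p → ℝ) (β : Fin p → ℝ)
    (i j : Fin n) : ℝ :=
  (x1 i - x1 j) + dot (fun h => xm1 i h - xm1 j h) β

lemma dot_sub_left {p : ℕ} (a b β : Fin p → ℝ) :
    dot (fun h => a h - b h) β = dot a β - dot b β := by
  simp only [dot, sub_mul, Finset.sum_sub_distrib]

lemma continuous_dot_right {p : ℕ} (a : Fin p → ℝ) : Continuous (dot a) :=
  continuous_finsetSum _ fun h _ => continuous_const.mul (continuous_apply h)

lemma isCompact_box {p : ℕ} (lb ub : Fin p → ℝ) : IsCompact (Box lb ub) := by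
  have hIcc : Box lb ub = Set.Icc lb ub := by
    ext β
    simp [Box, Pi.le_def, forall_and]
  rw [hIcc]
  exact isCompact_Icc

lemma Rind_eq_ite_margin_pos {n p : ℕ} (x1 : Fin n → ℝ) (xm1 : Fin n → Fin p → ℝ)
    (β : Fin p → ℝ) (i j : Fin n) :
    Rind x1 xm1 β i j = if 0 < margin x1 xm1 β i j then 1 else 0 := by
  have hiff : x1 j + dot (xm1 j) β < x1 i + dot (xm1 i) β ↔ 0 < margin x1 xm1 β i j := by
    rw [margin, dot_sub_left]
    constructor <;> intro h <;> linarith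
  simp only [Rind, hiff]

lemma Rind_eq_zero_or_one {n p : ℕ} (x1 : Fin n → ℝ) (xm1 : Fin n → Fin p → ℝ)
    (β : Fin p → ℝ) (i j : Fin n) :
    Rind x1 xm1 β i j = 0 ∨ Rind x1 xm1 β i j = 1 := by
  unfold Rind
  split_ifs <;> simp

lemma abs_margin_lt {n p : ℕ} {x1 : Fin n → ℝ} {xm1 : Fin n → Fin p → ℝ}
    {lb ub : Fin p → ℝ} {M : Fin n → Fin n → ℝ}
    (hM : ∀ i j : Fin n, i ≠ j →
      sSup ((fun β => |(x1 i - x1 j) + dot (fun h => xm1 i h - xm1 j h) β|)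
        '' Box lb ub) < M i j)
    {β : Fin p → ℝ} (hβ : β ∈ Box lb ub) {i j : Fin n} (hij : i ≠ j) :
    |margin x1 xm1 β i j| < M i j := by
  have hcont : Continuous fun β => |margin x1 xm1 β i j| :=
    (continuous_const.add (continuous_dot_right _)).abs
  exact (le_csSup ((isCompact_box lb ub).image hcont).bddAbove
    (Set.mem_image_of_mem _ hβ)).trans_lt (hM i j hij)

lemma bigM_iff {v M d : ℝ} (hv : |v| < M) (hd : d = 0 ∨ d = 1) :
    ((d - 1) * M < v ∧ v ≤ d * M) ↔ d = if 0 < v then 1 else 0 := by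
  obtain ⟨hlo, hhi⟩ := abs_lt.1 hv
  rcases hd with rfl | rfl <;> by_cases hpos : 0 < v <;> simp [hpos, hlo, hhi.le, not_lt.1]

lemma ite_ne_zero_le_of_mul_le_of_le_mul {b e l u : ℝ} (he : e = 0 ∨ e = 1)
    (hb : e * l ≤ b ∧ b ≤ e * u) : (if b ≠ 0 then (1 : ℝ) else 0) ≤ e := by
  rcases he with rfl | rfl
  · simp only [zero_mul] at hb
    simp [le_antisymm hb.2 hb.1]
  · split_ifs <;> norm_num

lemma card_support_le_sum {ι : Type*} [Fintype ι] {β e lb ub : ι → ℝ}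
    (he : ∀ h, e h = 0 ∨ e h = 1) (hβ : ∀ h, e h * lb h ≤ β h ∧ β h ≤ e h * ub h) :
    ((Finset.univ.filter fun h => β h ≠ 0).card : ℝ) ≤ ∑ h, e h := by
  rw [← Finset.sum_boole]
  exact Finset.sum_le_sum fun h _ => ite_ne_zero_le_of_mul_le_of_le_mul (he h) (hβ h)

lemma one_sub_add_mul_eq_ite_eq {t r : ℝ} (ht : t = 0 ∨ t = 1) (hr : r = 0 ∨ r = 1) :
    (1 - t) + (2 * t - 1) * r = if t = r then 1 else 0 := by
  rcases ht with rfl | rfl <;> rcases hr with rfl | rfl <;> norm_num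

/-- `S_n` factors through the `{0,1}`-valued matrix `(R_β(x_i, x_j))_{ij}`, of which there are
finitely many. -/
lemma finite_image_Sn {n p : ℕ} (y x1 : Fin n → ℝ) (xm1 : Fin n → Fin p → ℝ)
    (S : Set (Fin p → ℝ)) : (Sn y x1 xm1 '' S).Finite := by
  classical
  let score : (Fin n → Fin n → ℝ) → ℝ := fun r =>
    (2 / ((n : ℝ) * ((n : ℝ) - 1))) *
      ∑ i, ∑ j, if i < j then
        (if (if y j < y i then (1 : ℝ) else 0) = r i j then (1 : ℝ) else 0)
      else 0
  have hrange : Set.range (Rind x1 xm1) ⊆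
      Set.range fun b : Fin n → Fin n → Bool => fun i j => if b i j then (1 : ℝ) else 0 := by
    rintro _ ⟨β, rfl⟩
    exact ⟨fun i j => decide (x1 j + dot (xm1 j) β < x1 i + dot (xm1 i) β), by
      funext i j
      simp [Rind]⟩
  refine (((Set.finite_range _).subset hrange).image score).subset ?_
  rintro _ ⟨β, -, rfl⟩
  exact ⟨Rind x1 xm1 β, Set.mem_range_self β, rfl⟩

lemma exists_isMaxOn_Sn {n p : ℕ} (y x1 : Fin n → ℝ) (xm1 : Fin n → Fin p → ℝ)
    {S : Set (Fin p → ℝ)} (hS : S.Nonempty) :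
    ∃ β ∈ S, ∀ β' ∈ S, Sn y x1 xm1 β' ≤ Sn y x1 xm1 β := by
  have hfin := finite_image_Sn y x1 xm1 S
  obtain ⟨β, hβ, hβsup⟩ := (hS.image _).csSup_mem hfin
  exact ⟨β, hβ, fun β' hβ' =>
    hβsup ▸ le_csSup hfin.bddAbove (Set.mem_image_of_mem _ hβ')⟩

section Feasible

variable {n p : ℕ} {x1 : Fin n → ℝ} {xm1 : Fin n → Fin p → ℝ}
  {s : ℕ} {lb ub : Fin p → ℝ} {M : Fin n → Fin n → ℝ}

lemma card_support_le_of_mem_feas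
    {bde : (Fin p → ℝ) × (Fin n → Fin n → ℝ) × (Fin p → ℝ)}
    (hf : bde ∈ Feas x1 xm1 lb ub M s) :
    (Finset.univ.filter fun h => bde.1 h ≠ 0).card ≤ s := by
  obtain ⟨-, -, he, -, hβ, hsum⟩ := hf
  exact_mod_cast (card_support_le_sum he hβ).trans hsum

lemma d_eq_Rind_of_mem_feas
    (hM : ∀ i j : Fin n, i ≠ j →
      sSup ((fun β => |(x1 i - x1 j) + dot (fun h => xm1 i h - xm1 j h) β|)
        '' Box lb ub) < M i j)
    {bde : (Fin p → ℝ) × (Fin n → Fin n → ℝ) × (Fin p → ℝ)}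
    (hf : bde ∈ Feas x1 xm1 lb ub M s) {i j : Fin n} (hij : i ≠ j) :
    bde.2.1 i j = Rind x1 xm1 bde.1 i j := by
  obtain ⟨hβ, hd, -, hbigM, -, -⟩ := hf
  rw [Rind_eq_ite_margin_pos]
  exact (bigM_iff (abs_margin_lt hM hβ hij) (hd i j hij)).1 (hbigM i j hij)

lemma Lobj_eq_Sn_of_mem_feas (y : Fin n → ℝ)
    (hM : ∀ i j : Fin n, i ≠ j →
      sSup ((fun β => |(x1 i - x1 j) + dot (fun h => xm1 i h - xm1 j h) β|)
        '' Box lb ub) < M i j)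
    {bde : (Fin p → ℝ) × (Fin n → Fin n → ℝ) × (Fin p → ℝ)}
    (hf : bde ∈ Feas x1 xm1 lb ub M s) :
    Lobj y bde = Sn y x1 xm1 bde.1 := by
  unfold Lobj Sn
  congr 1
  refine Finset.sum_congr rfl fun i _ => Finset.sum_congr rfl fun j _ => ?_
  by_cases hij : i < j
  · rw [if_pos hij, if_pos hij, d_eq_Rind_of_mem_feas hM hf hij.ne]
    exact one_sub_add_mul_eq_ite_eq (by split_ifs <;> simp) (Rind_eq_zero_or_one _ _ _ _ _)
  · rw [if_neg hij, if_neg hij]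

lemma mk_mem_feas
    (hM : ∀ i j : Fin n, i ≠ j →
      sSup ((fun β => |(x1 i - x1 j) + dot (fun h => xm1 i h - xm1 j h) β|)
        '' Box lb ub) < M i j)
    {β : Fin p → ℝ} (hβ : β ∈ BoxS lb ub s) :
    (β, Rind x1 xm1 β, fun h => if β h ≠ 0 then (1 : ℝ) else 0)
      ∈ Feas x1 xm1 lb ub M s := by
  obtain ⟨hbox, hcard⟩ := hβ
  refine ⟨hbox, fun i j _ => Rind_eq_zero_or_one _ _ _ _ _, fun h => ?_, fun i j hij => ?_,
    fun h => ?_, ?_⟩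
  · dsimp only
    split_ifs <;> simp
  · exact (bigM_iff (abs_margin_lt hM hbox hij) (Rind_eq_zero_or_one _ _ _ _ _)).2
      (Rind_eq_ite_margin_pos _ _ _ _ _)
  · by_cases hβh : β h = 0
    · simp [hβh]
    · simpa [hβh] using hbox h
  · rw [Finset.sum_boole]
    exact_mod_cast hcard

lemma image_Lobj_feas_eq_image_Sn (y : Fin n → ℝ)
    (hM : ∀ i j : Fin n, i ≠ j →
      sSup ((fun β => |(x1 i - x1 j) + dot (fun h => xm1 i h - xm1 j h) β|)
        '' Box lb ub) < M i j) :
    Lobj y '' Feas x1 xm1 lb ub M s = Sn y x1 xm1 '' BoxS lb ub s := by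
  ext r
  constructor
  · rintro ⟨bde, hf, rfl⟩
    exact ⟨bde.1, ⟨hf.1, card_support_le_of_mem_feas hf⟩, (Lobj_eq_Sn_of_mem_feas y hM hf).symm⟩
  · rintro ⟨β, hβ, rfl⟩
    exact ⟨_, mk_mem_feas hM hβ, Lobj_eq_Sn_of_mem_feas y hM (mk_mem_feas hM hβ)⟩

end Feasible

theorem best_subset_mip_equivalence_general (n p : ℕ)
    (y : Fin n → ℝ) (x1 : Fin n → ℝ) (xm1 : Fin n → Fin p → ℝ)
    (s : ℕ) (lb ub : Fin p → ℝ) (hbox : ∀ h, lb h ≤ 0 ∧ 0 ≤ ub h)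
    (M : Fin n → Fin n → ℝ)
    (hM : ∀ i j : Fin n, i ≠ j →
      sSup ((fun β => |(x1 i - x1 j) + dot (fun h => xm1 i h - xm1 j h) β|)
        '' Box lb ub) < M i j) :
    (∀ bde ∈ Feas x1 xm1 lb ub M s,
        (Finset.univ.filter fun h => bde.1 h ≠ 0).card ≤ s ∧
        (∀ i j : Fin n, i ≠ j → bde.2.1 i j = Rind x1 xm1 bde.1 i j) ∧
        Lobj y bde = Sn y x1 xm1 bde.1) ∧
    sSup (Lobj y '' Feas x1 xm1 lb ub M s)
      = sSup (Sn y x1 xm1 '' BoxS lb ub s) ∧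
    (∃ β ∈ BoxS lb ub s, ∀ β' ∈ BoxS lb ub s,
        Sn y x1 xm1 β' ≤ Sn y x1 xm1 β) ∧
    (∀ bde ∈ Feas x1 xm1 lb ub M s,
      (∀ bde' ∈ Feas x1 xm1 lb ub M s, Lobj y bde' ≤ Lobj y bde) →
        ∀ β' ∈ BoxS lb ub s, Sn y x1 xm1 β' ≤ Sn y x1 xm1 bde.1) := by
  have hzero : (0 : Fin p → ℝ) ∈ BoxS lb ub s := ⟨hbox, by simp⟩
  refine ⟨fun bde hf => ⟨card_support_le_of_mem_feas hf,
      fun i j hij => d_eq_Rind_of_mem_feas hM hf hij, Lobj_eq_Sn_of_mem_feas y hM hf⟩,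
    by rw [image_Lobj_feas_eq_image_Sn y hM], exists_isMaxOn_Sn y x1 xm1 ⟨0, hzero⟩, ?_⟩
  intro bde hf hopt β' hβ'
  have hlift := mk_mem_feas (M := M) hM hβ'
  calc Sn y x1 xm1 β' = Lobj y _ := (Lobj_eq_Sn_of_mem_feas y hM hlift).symm
    _ ≤ Lobj y bde := hopt _ hlift
    _ = Sn y x1 xm1 bde.1 := Lobj_eq_Sn_of_mem_feas y hM hf

/-- **Equivalence of the ℓ₀-constrained best subset rank prediction problem and
its MIP reformulation**: for any feasible `(β, d, e)` one has `‖β‖₀ ≤ s`,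
`d_{ij} = R_β(x_i, x_j)` and `L(β, d) = S_n(β)`; the optimal value of the MIP
equals the (attained) maximum of `S_n` over `{β ∈ B : ‖β‖₀ ≤ s}`, and the
`β`-component of any MIP maximizer maximizes `S_n` over that set. -/
theorem best_subset_mip_equivalence (n p : ℕ) (hn : 2 ≤ n)
    (y : Fin n → ℝ) (x1 : Fin n → ℝ) (xm1 : Fin n → Fin p → ℝ)
    (s : ℕ) (lb ub : Fin p → ℝ) (hbox : ∀ h, lb h ≤ 0 ∧ 0 ≤ ub h)
    (M : Fin n → Fin n → ℝ)
    (hM : ∀ i j : Fin n, i ≠ j →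
      sSup ((fun β => |(x1 i - x1 j) + dot (fun h => xm1 i h - xm1 j h) β|)
        '' Box lb ub) < M i j) :
    (∀ bde ∈ Feas x1 xm1 lb ub M s,
        (Finset.univ.filter fun h => bde.1 h ≠ 0).card ≤ s ∧
        (∀ i j : Fin n, i ≠ j → bde.2.1 i j = Rind x1 xm1 bde.1 i j) ∧
        Lobj y bde = Sn y x1 xm1 bde.1) ∧
    sSup (Lobj y '' Feas x1 xm1 lb ub M s)
      = sSup (Sn y x1 xm1 '' BoxS lb ub s) ∧
    (∃ β ∈ BoxS lb ub s, ∀ β' ∈ BoxS lb ub s,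
        Sn y x1 xm1 β' ≤ Sn y x1 xm1 β) ∧
    (∀ bde ∈ Feas x1 xm1 lb ub M s,
      (∀ bde' ∈ Feas x1 xm1 lb ub M s, Lobj y bde' ≤ Lobj y bde) →
        ∀ β' ∈ BoxS lb ub s, Sn y x1 xm1 β' ≤ Sn y x1 xm1 bde.1) :=
  best_subset_mip_equivalence_general n p y x1 xm1 s lb ub hbox M hM

end BestSubsetMip
end
end
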